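/- arXiv:2005.07402 — 7 statements merged into one kernel-verified Lean document; each statement's English description precedes it below -/
import Mathlib

section
/- Let μ and ν be probability measures on a measurable space Ω, let 0 ≤ a < b < ∞, and let L : Ω → ℝ be a measurable function with a ≤ L(ω) ≤ b for all ω. If μ is absolutely continuous with respect to ν and KL(μ‖ν) < ∞, then ∫ L dμ − ∫ L dν ≤ KL(μ‖ν) + 2·log((e^a + e^b)/2) − a − b. -/
/-!
Gibbs' inequality for `μ` against the tilted measure `ν e^L / ∫ e^L dν` is the Donsker–Varadhan
bound `∫ L dμ ≤ KL(μ‖ν) + log ∫ e^L dν`. By convexity of `exp`, `∫ e^L dν ≤ p eᵃ + q eᵇ`, where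
`p, q ≥ 0`, `p + q = 1` and `p a + q b = ∫ L dν`. Finally `log (p eᵃ + q eᵇ) - (p a + q b) ≤ C`,
since convexity again gives `(p eᵃ + q eᵇ) e^(q a + p b) ≤ (p eᵃ + q eᵇ) (q eᵃ + p eᵇ)`, and the
last product has two factors of sum `eᵃ + eᵇ`, so it is at most `((eᵃ + eᵇ) / 2)²`.
-/

open MeasureTheory Real Classical

/-- The Kullback--Leibler divergence `KL(μ‖ν) = ∫ log (dμ/dν) dμ`, taking the value `⊤`
unless `μ ≪ ν` and the log-likelihood ratio is integrable. -/
noncomputable def klDiv {Ω : Type*} [MeasurableSpace Ω] (μ ν : Measure Ω) : EReal :=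
  if μ ≪ ν ∧ Integrable (llr μ ν) μ then ((∫ ω, llr μ ν ω ∂μ : ℝ) : EReal) else ⊤

open Set ProbabilityTheory

theorem ConvexOn.le_secant_of_mem_Icc {f : ℝ → ℝ} {a b x : ℝ} (hf : ConvexOn ℝ (Icc a b) f)
    (hab : a < b) (hx : x ∈ Icc a b) :
    f x ≤ (b - x) / (b - a) * f a + (x - a) / (b - a) * f b := by
  have hba : 0 < b - a := sub_pos.2 hab
  have h := hf.2 (left_mem_Icc.2 hab.le) (right_mem_Icc.2 hab.le)
    (div_nonneg (sub_nonneg.2 hx.2) hba.le) (div_nonneg (sub_nonneg.2 hx.1) hba.le)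
    (by field_simp; ring)
  have hcomb : (b - x) / (b - a) * a + (x - a) / (b - a) * b = x := by
    field_simp
    ring
  simpa only [smul_eq_mul, hcomb] using h

theorem log_mul_exp_add_mul_exp_sub_le {a b p q : ℝ} (hp : 0 ≤ p) (hq : 0 ≤ q) (hpq : p + q = 1) :
    log (p * exp a + q * exp b) - (p * a + q * b) ≤ 2 * log ((exp a + exp b) / 2) - a - b := by
  have hconv {s t : ℝ} (hs : 0 ≤ s) (ht : 0 ≤ t) (hst : s + t = 1) :
      exp (s * a + t * b) ≤ s * exp a + t * exp b :=
    convexOn_exp.2 (mem_univ a) (mem_univ b) hs ht hst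
  set X := p * exp a + q * exp b
  set Y := q * exp a + p * exp b
  have hX : 0 < X := (exp_pos _).trans_le (hconv hp hq hpq)
  have hXY : X * exp (q * a + p * b) ≤ ((exp a + exp b) / 2) ^ 2 := calc
    X * exp (q * a + p * b) ≤ X * Y := by gcongr; exact hconv hq hp (by linarith)
    _ ≤ ((X + Y) / 2) ^ 2 := by nlinarith [sq_nonneg (X - Y)]
    _ = ((exp a + exp b) / 2) ^ 2 := by congr 2; linear_combination (exp a + exp b) * hpq
  have h := log_le_log (by positivity) hXY
  rw [log_mul hX.ne' (exp_pos _).ne', log_exp, log_pow] at h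
  push_cast at h
  linear_combination h - (a + b) * hpq

section

variable {Ω : Type*} [MeasurableSpace Ω] {μ ν : Measure Ω}

theorem integral_llr_nonneg [IsProbabilityMeasure μ] [IsProbabilityMeasure ν] (hμν : μ ≪ ν)
    (h_int : Integrable (llr μ ν) μ) : 0 ≤ ∫ x, llr μ ν x ∂μ := by
  simpa using InformationTheory.integral_llr_add_sub_measure_univ_nonneg hμν h_int

theorem integral_le_integral_llr_add_log_integral_exp [IsProbabilityMeasure μ] [SigmaFinite ν]
    [NeZero ν] {f : Ω → ℝ} (hμν : μ ≪ ν) (h_int : Integrable (llr μ ν) μ)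
    (hfμ : Integrable f μ) (hfν : Integrable (fun x ↦ exp (f x)) ν) :
    ∫ x, f x ∂μ ≤ ∫ x, llr μ ν x ∂μ + log (∫ x, exp (f x) ∂ν) := by
  have : IsProbabilityMeasure (ν.tilted f) := isProbabilityMeasure_tilted hfν
  have h := integral_llr_nonneg (hμν.trans (absolutelyContinuous_tilted hfν))
    (integrable_llr_tilted_right hμν hfμ h_int hfν)
  rw [integral_llr_tilted_right hμν hfμ hfν h_int] at h
  linarith

theorem integrable_exp_of_mem_Icc [IsFiniteMeasure ν] {f : Ω → ℝ} {a b : ℝ}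
    (hm : AEMeasurable f ν) (hb : ∀ᵐ x ∂ν, f x ∈ Icc a b) : Integrable (fun x ↦ exp (f x)) ν := by
  simpa using integrable_exp_mul_of_mem_Icc (t := 1) hm hb

theorem integral_mem_Icc_of_mem_Icc [IsProbabilityMeasure ν] {f : Ω → ℝ} {a b : ℝ}
    (hf : Integrable f ν) (hb : ∀ᵐ x ∂ν, f x ∈ Icc a b) : ∫ x, f x ∂ν ∈ Icc a b := by
  constructor
  · simpa using integral_mono_ae (integrable_const a) hf (hb.mono fun _ h ↦ h.1)
  · simpa using integral_mono_ae hf (integrable_const b) (hb.mono fun _ h ↦ h.2)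

theorem integral_exp_le_of_mem_Icc [IsProbabilityMeasure ν] {f : Ω → ℝ} {a b : ℝ} (hab : a < b)
    (hm : AEMeasurable f ν) (hb : ∀ᵐ x ∂ν, f x ∈ Icc a b) :
    ∫ x, exp (f x) ∂ν ≤
      (b - ∫ x, f x ∂ν) / (b - a) * exp a + (∫ x, f x ∂ν - a) / (b - a) * exp b := by
  have hf : Integrable f ν := .of_mem_Icc a b hm hb
  calc ∫ x, exp (f x) ∂ν
      ≤ ∫ x, ((b - f x) / (b - a) * exp a + (f x - a) / (b - a) * exp b) ∂ν := by
        refine integral_mono_ae (integrable_exp_of_mem_Icc hm hb)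
          (by fun_prop) (hb.mono fun x hx ↦ ?_)
        exact (convexOn_exp.subset (subset_univ _) (convex_Icc a b)).le_secant_of_mem_Icc hab hx
    _ = _ := by
        rw [integral_add (by fun_prop) (by fun_prop)]
        simp only [integral_mul_const, integral_div, integral_sub (integrable_const b) hf,
          integral_sub hf (integrable_const a)]
        simp

theorem log_integral_exp_sub_integral_le_s0 [IsProbabilityMeasure ν] {f : Ω → ℝ} {a b : ℝ}
    (hab : a < b) (hm : AEMeasurable f ν) (hb : ∀ᵐ x ∂ν, f x ∈ Icc a b) :
    log (∫ x, exp (f x) ∂ν) - ∫ x, f x ∂ν ≤ 2 * log ((exp a + exp b) / 2) - a - b := by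
  set m := ∫ x, f x ∂ν
  have hm_mem : m ∈ Icc a b := integral_mem_Icc_of_mem_Icc (.of_mem_Icc a b hm hb) hb
  have hba : 0 < b - a := sub_pos.2 hab
  have hmean : (b - m) / (b - a) * a + (m - a) / (b - a) * b = m := by field_simp; ring
  calc log (∫ x, exp (f x) ∂ν) - m
      ≤ log ((b - m) / (b - a) * exp a + (m - a) / (b - a) * exp b) - m :=
        sub_le_sub_right (log_le_log (integral_exp_pos (integrable_exp_of_mem_Icc hm hb))
          (integral_exp_le_of_mem_Icc hab hm hb)) m
    _ ≤ 2 * log ((exp a + exp b) / 2) - a - b := by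
        have h := log_mul_exp_add_mul_exp_sub_le (a := a) (b := b)
          (div_nonneg (sub_nonneg.2 hm_mem.2) hba.le) (div_nonneg (sub_nonneg.2 hm_mem.1) hba.le)
          (by field_simp; ring)
        rwa [hmean] at h

end

theorem expected_loss_diff_le_klDiv_add_const_general
    {Ω : Type*} [MeasurableSpace Ω] (μ ν : Measure Ω)
    [IsProbabilityMeasure μ] [IsProbabilityMeasure ν]
    (a b : ℝ) (hab : a < b)
    (L : Ω → ℝ) (hL : Measurable L) (hLa : ∀ ω, a ≤ L ω) (hLb : ∀ ω, L ω ≤ b)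
    (hfin : klDiv μ ν < ⊤) :
    ∫ ω, L ω ∂μ - ∫ ω, L ω ∂ν ≤
      (klDiv μ ν).toReal + 2 * Real.log ((Real.exp a + Real.exp b) / 2) - a - b := by
  obtain ⟨hac, h_int⟩ : μ ≪ ν ∧ Integrable (llr μ ν) μ := by
    by_contra h
    simp [klDiv, h] at hfin
  have hkl : (klDiv μ ν).toReal = ∫ ω, llr μ ν ω ∂μ := by simp [klDiv, hac, h_int]
  have hLab : ∀ ω, L ω ∈ Icc a b := fun ω ↦ ⟨hLa ω, hLb ω⟩
  have hDV := integral_le_integral_llr_add_log_integral_exp hac h_int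
    (.of_mem_Icc a b hL.aemeasurable (ae_of_all μ hLab))
    (integrable_exp_of_mem_Icc hL.aemeasurable (ae_of_all ν hLab))
  have hcgf := log_integral_exp_sub_integral_le_s0 hab hL.aemeasurable (ae_of_all ν hLab)
  rw [hkl]
  linarith

/-- **Theorem 1 of the paper.** For probability measures `μ ≪ ν` with finite KL divergence and
a measurable loss `L` with values in `[a, b]`, `0 ≤ a < b`, the difference of the expected
losses is bounded by `KL(μ‖ν) + C` with `C = 2 log((eᵃ + eᵇ)/2) − a − b`. -/
theorem expected_loss_diff_le_klDiv_add_const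
    {Ω : Type*} [MeasurableSpace Ω] (μ ν : Measure Ω)
    [IsProbabilityMeasure μ] [IsProbabilityMeasure ν]
    (a b : ℝ) (ha : 0 ≤ a) (hab : a < b)
    (L : Ω → ℝ) (hL : Measurable L) (hLa : ∀ ω, a ≤ L ω) (hLb : ∀ ω, L ω ≤ b)
    (hac : μ ≪ ν) (hfin : klDiv μ ν < ⊤) :
    ∫ ω, L ω ∂μ - ∫ ω, L ω ∂ν ≤
      (klDiv μ ν).toReal + 2 * Real.log ((Real.exp a + Real.exp b) / 2) - a - b :=
  expected_loss_diff_le_klDiv_add_const_general μ ν a b hab L hL hLa hLb hfin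
end

section
/- Let a < b be real numbers, let h : ℝ → ℝ be continuous on [a, b] and concave on [a, b], and let μ be a probability measure on ℝ with μ([a, b]) = 1. Then h(∫ x dμ(x)) − ∫ h(x) dμ(x) ≤ 2·h((a + b)/2) − h(a) − h(b). -/
/-!
Let `L` be the secant line of `h` through `(a, h a)` and `(b, h b)`. Concavity puts `L` below `h`
on `[a, b]`, so `∫ h dμ ≥ ∫ L dμ = L(∫ x dμ)` and the Jensen gap is at most `h - L` evaluated at the
mean. Pointwise, with `x' = a + b - x` the reflection of `x`, midpoint concavity gives
`h x ≤ 2 h((a+b)/2) - h x'`, while `h x' ≥ L x' = h a + h b - L x`; hence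
`h x - L x ≤ 2 h((a+b)/2) - h a - h b`.
-/

open MeasureTheory Set

noncomputable def secant (f : ℝ → ℝ) (a b x : ℝ) : ℝ := f a + slope f a b * (x - a)

lemma continuous_secant (f : ℝ → ℝ) (a b : ℝ) : Continuous (secant f a b) := by
  unfold secant
  fun_prop

lemma secant_add_secant_reflect (f : ℝ → ℝ) {a b : ℝ} (hab : a ≠ b) (x : ℝ) :
    secant f a b x + secant f a b (a + b - x) = f a + f b := by
  have hba : b - a ≠ 0 := sub_ne_zero.2 hab.symm
  simp only [secant, slope_def_field]
  field_simp
  ring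

lemma ConcaveOn.secant_le {f : ℝ → ℝ} {a b x : ℝ} (hf : ConcaveOn ℝ (Icc a b) f)
    (hx : x ∈ Icc a b) : secant f a b x ≤ f x := by
  rcases hx.1.eq_or_lt with rfl | hax
  · simp [secant]
  have hb : b ∈ Icc a b \ {a} := ⟨right_mem_Icc.2 (hx.1.trans hx.2), (hax.trans_le hx.2).ne'⟩
  have hslope : slope f a b ≤ slope f a x :=
    hf.slope_anti (left_mem_Icc.2 (hx.1.trans hx.2)) ⟨hx, hax.ne'⟩ hb hx.2
  calc secant f a b x ≤ f a + slope f a x * (x - a) := by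
        unfold secant; gcongr
    _ = f x := by
        rw [slope_def_field, div_mul_cancel₀ _ (sub_ne_zero.2 hax.ne')]
        ring

lemma ConcaveOn.add_reflect_le_two_mul_midpoint {f : ℝ → ℝ} {a b x : ℝ}
    (hf : ConcaveOn ℝ (Icc a b) f) (hx : x ∈ Icc a b) :
    f x + f (a + b - x) ≤ 2 * f ((a + b) / 2) := by
  have hx' : a + b - x ∈ Icc a b := ⟨by linarith [hx.2], by linarith [hx.1]⟩
  have := hf.2 hx hx' (by norm_num : (0 : ℝ) ≤ 1 / 2) (by norm_num : (0 : ℝ) ≤ 1 / 2)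
    (by norm_num)
  simp only [smul_eq_mul] at this
  rw [show 1 / 2 * x + 1 / 2 * (a + b - x) = (a + b) / 2 by ring] at this
  linarith

lemma ConcaveOn.sub_secant_le {f : ℝ → ℝ} {a b x : ℝ} (hf : ConcaveOn ℝ (Icc a b) f)
    (hab : a ≠ b) (hx : x ∈ Icc a b) :
    f x - secant f a b x ≤ 2 * f ((a + b) / 2) - f a - f b := by
  have hx' : a + b - x ∈ Icc a b := ⟨by linarith [hx.2], by linarith [hx.1]⟩
  linarith [hf.add_reflect_le_two_mul_midpoint hx, hf.secant_le hx',
    secant_add_secant_reflect f hab x]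

lemma integral_secant (f : ℝ → ℝ) (a b : ℝ) {μ : Measure ℝ} [IsProbabilityMeasure μ]
    (hμ : Integrable (fun x ↦ x) μ) :
    ∫ x, secant f a b x ∂μ = secant f a b (∫ x, x ∂μ) := by
  have hμa : Integrable (fun x ↦ x - a) μ := hμ.sub (integrable_const a)
  simp only [secant]
  rw [integral_add (integrable_const _) (hμa.const_mul _),
    integral_const_mul, integral_sub hμ (integrable_const a)]
  simp

lemma ContinuousOn.integrable_of_ae_mem {X E : Type*} [TopologicalSpace X] [T2Space X]
    [MeasurableSpace X] [OpensMeasurableSpace X] [NormedAddCommGroup E] {f : X → E} {K : Set X}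
    {μ : Measure X} [IsFiniteMeasureOnCompacts μ] (hK : IsCompact K) (hf : ContinuousOn f K)
    (hμ : ∀ᵐ x ∂μ, x ∈ K) : Integrable f μ := by
  rw [← Measure.restrict_eq_self_of_ae_mem hμ]
  exact hf.integrableOn_compact hK

/-- **Simic's bound on the Jensen gap (Lemma 2 of the paper).**
For `h` continuous and concave on `[a, b]` and a probability measure `μ` on `ℝ`
concentrated on `[a, b]`, the Jensen gap `h(E[X]) − E[h(X)]` is bounded by
`2 h((a+b)/2) − h(a) − h(b)`. -/
theorem jensen_gap_le
    (a b : ℝ) (hab : a < b) (h : ℝ → ℝ)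
    (hcont : ContinuousOn h (Set.Icc a b)) (hconc : ConcaveOn ℝ (Set.Icc a b) h)
    (μ : Measure ℝ) [IsProbabilityMeasure μ] (hμ : μ (Set.Icc a b) = 1) :
    h (∫ x, x ∂μ) - ∫ x, h x ∂μ ≤ 2 * h ((a + b) / 2) - h a - h b := by
  have hae : ∀ᵐ x ∂μ, x ∈ Icc a b := (mem_ae_iff_prob_eq_one measurableSet_Icc).2 hμ
  have hid : Integrable (fun x ↦ x) μ := continuousOn_id.integrable_of_ae_mem isCompact_Icc hae
  have hmean : ∫ x, x ∂μ ∈ Icc a b := (convex_Icc a b).integral_mem isClosed_Icc hae hid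
  have hsecant : ∫ x, secant h a b x ∂μ ≤ ∫ x, h x ∂μ :=
    integral_mono_ae
      ((continuous_secant h a b).continuousOn.integrable_of_ae_mem isCompact_Icc hae)
      (hcont.integrable_of_ae_mem isCompact_Icc hae) (hae.mono fun x hx ↦ hconc.secant_le hx)
  calc h (∫ x, x ∂μ) - ∫ x, h x ∂μ ≤ h (∫ x, x ∂μ) - secant h a b (∫ x, x ∂μ) := by
        rw [← integral_secant h a b hid]; linarith
    _ ≤ 2 * h ((a + b) / 2) - h a - h b := hconc.sub_secant_le hab.ne hmean
end

section
/- Let ν be a probability measure on a measurable space Ω, let 0 ≤ a < b < ∞, and let L : Ω → ℝ be a measurable function with a ≤ L(ω) ≤ b for all ω. Then log(∫ e^{L} dν) − ∫ L dν ≤ 2·log((e^a + e^b)/2) − a − b. -/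
/-!
Simic's bound on the Jensen gap of a concave function `h` on `[p, q]`: by concavity `h ∘ X`
lies above the chord of `h`, so `∫ h ∘ X` is at least the chord evaluated at `m = ∫ X`, and the
gap `h m - chord m` is bounded by adding the (nonnegative) gap at the reflected point `p + q - m`:
the two chord values sum to `h p + h q`, and `h m + h (p + q - m) ≤ 2 h ((p + q) / 2)`.
For `h = log`, `X = exp ∘ L`, `p = eᵃ`, `q = eᵇ` this is the theorem.
-/

open MeasureTheory Real Set

namespace ConcaveOn

variable {h : ℝ → ℝ} {p q : ℝ}

theorem add_slope_mul_sub_le (hh : ConcaveOn ℝ (Icc p q) h) {x : ℝ} (hx : x ∈ Icc p q) :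
    h p + slope h p q * (x - p) ≤ h x := by
  obtain ⟨hpx, hxq⟩ := hx
  rcases (hpx.trans hxq).eq_or_lt with rfl | hpq
  · simp [le_antisymm hxq hpx]
  have hqp : 0 < q - p := sub_pos.2 hpq
  have hconc := hh.2 (left_mem_Icc.2 hpq.le) (right_mem_Icc.2 hpq.le)
    (div_nonneg (sub_nonneg.2 hxq) hqp.le) (div_nonneg (sub_nonneg.2 hpx) hqp.le)
    (by field_simp; ring)
  have hcomb : (q - x) / (q - p) * p + (x - p) / (q - p) * q = x := by field_simp; ring
  simp only [smul_eq_mul, hcomb] at hconc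
  calc h p + slope h p q * (x - p)
      = (q - x) / (q - p) * h p + (x - p) / (q - p) * h q := by
        rw [slope_def_field]; field_simp; ring
    _ ≤ h x := hconc

theorem sub_chord_le (hh : ConcaveOn ℝ (Icc p q) h) {x : ℝ} (hx : x ∈ Icc p q) :
    h x - (h p + slope h p q * (x - p)) ≤ 2 * h ((p + q) / 2) - h p - h q := by
  have hx' : p + q - x ∈ Icc p q := ⟨by linarith [hx.2], by linarith [hx.1]⟩
  have hchord' := hh.add_slope_mul_sub_le hx'
  have hmid := hh.2 hx hx' (by norm_num : (0 : ℝ) ≤ 1 / 2) (by norm_num : (0 : ℝ) ≤ 1 / 2)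
    (by norm_num)
  simp only [smul_eq_mul] at hmid
  have hslope : slope h p q * (q - p) = h q - h p := by
    simpa [mul_comm] using sub_smul_slope h p q
  rw [show 1 / 2 * x + 1 / 2 * (p + q - x) = (p + q) / 2 by ring] at hmid
  linarith

variable {Ω : Type*} [MeasurableSpace Ω] {μ : Measure Ω} [IsProbabilityMeasure μ] {X : Ω → ℝ}

theorem add_slope_mul_integral_sub_le_integral (hh : ConcaveOn ℝ (Icc p q) h)
    (hX : ∀ᵐ ω ∂μ, X ω ∈ Icc p q) (hXi : Integrable X μ) (hhX : Integrable (fun ω ↦ h (X ω)) μ) :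
    h p + slope h p q * ((∫ ω, X ω ∂μ) - p) ≤ ∫ ω, h (X ω) ∂μ := by
  have hXp : Integrable (fun ω ↦ X ω - p) μ := hXi.sub (integrable_const p)
  have hchord : ∫ ω, (h p + slope h p q * (X ω - p)) ∂μ
      = h p + slope h p q * ((∫ ω, X ω ∂μ) - p) := by
    rw [integral_add (integrable_const _) (hXp.const_mul _), integral_const_mul,
      integral_sub hXi (integrable_const p)]
    simp
  rw [← hchord]
  exact integral_mono_ae ((integrable_const _).add (hXp.const_mul _))
    hhX (hX.mono fun ω ↦ hh.add_slope_mul_sub_le)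

theorem sub_integral_comp_le (hh : ConcaveOn ℝ (Icc p q) h)
    (hX : ∀ᵐ ω ∂μ, X ω ∈ Icc p q) (hXi : Integrable X μ) (hhX : Integrable (fun ω ↦ h (X ω)) μ) :
    h (∫ ω, X ω ∂μ) - ∫ ω, h (X ω) ∂μ ≤ 2 * h ((p + q) / 2) - h p - h q := by
  have hmean : ∫ ω, X ω ∂μ ∈ Icc p q := (convex_Icc p q).integral_mem isClosed_Icc hX hXi
  linarith [hh.sub_chord_le hmean, hh.add_slope_mul_integral_sub_le_integral hX hXi hhX]

end ConcaveOn

theorem log_integral_exp_sub_integral_le_general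
    {Ω : Type*} [MeasurableSpace Ω] (ν : Measure Ω) [IsProbabilityMeasure ν]
    (a b : ℝ)
    (L : Ω → ℝ) (hL : Measurable L) (hLa : ∀ ω, a ≤ L ω) (hLb : ∀ ω, L ω ≤ b) :
    Real.log (∫ ω, Real.exp (L ω) ∂ν) - ∫ ω, L ω ∂ν ≤
      2 * Real.log ((Real.exp a + Real.exp b) / 2) - a - b := by
  have hexp_mem : ∀ ω, exp (L ω) ∈ Icc (exp a) (exp b) :=
    fun ω ↦ ⟨exp_le_exp.2 (hLa ω), exp_le_exp.2 (hLb ω)⟩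
  have hlog : ConcaveOn ℝ (Icc (exp a) (exp b)) log :=
    strictConcaveOn_log_Ioi.concaveOn.subset (fun x hx ↦ (exp_pos a).trans_le hx.1) (convex_Icc _ _)
  have hLi : Integrable L ν :=
    Integrable.of_mem_Icc a b hL.aemeasurable (ae_of_all _ fun ω ↦ ⟨hLa ω, hLb ω⟩)
  have hexpi : Integrable (fun ω ↦ exp (L ω)) ν :=
    Integrable.of_mem_Icc _ _ hL.exp.aemeasurable (ae_of_all _ hexp_mem)
  simpa only [log_exp, sub_sub] using
    hlog.sub_integral_comp_le (ae_of_all _ hexp_mem) hexpi (by simpa only [log_exp] using hLi)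

/-- **Key intermediate step in the proof of Theorem 1 of the paper.**
For a probability measure `ν` and a measurable loss `L` with values in `[a, b]`, `0 ≤ a < b`,
the Jensen gap of the exponential satisfies
`log(∫ e^L dν) − ∫ L dν ≤ 2 log((eᵃ + eᵇ)/2) − a − b`. -/
theorem log_integral_exp_sub_integral_le
    {Ω : Type*} [MeasurableSpace Ω] (ν : Measure Ω) [IsProbabilityMeasure ν]
    (a b : ℝ) (ha : 0 ≤ a) (hab : a < b)
    (L : Ω → ℝ) (hL : Measurable L) (hLa : ∀ ω, a ≤ L ω) (hLb : ∀ ω, L ω ≤ b) :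
    Real.log (∫ ω, Real.exp (L ω) ∂ν) - ∫ ω, L ω ∂ν ≤
      2 * Real.log ((Real.exp a + Real.exp b) / 2) - a - b :=
  log_integral_exp_sub_integral_le_general ν a b L hL hLa hLb
end

section
/- Let μ, y ∈ ℝ and let s > 0, β > 0. Set μ' = μ + s·(y − μ)/(s + β⁻¹) and s' = s·β⁻¹/(s + β⁻¹). Then KL(N(μ, s) ‖ N(μ', s')) = (1/2)·β·s − (1/2)·log(1 + β·s) + (1/2)·(β·s/(s + β⁻¹))·(y − μ)². -/
open MeasureTheory ProbabilityTheory Real Classical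
open scoped NNReal

/-!
The log-likelihood ratio of two nondegenerate Gaussians is the difference of their log-densities,
a quadratic polynomial in `x`, so its mean under `N(m₁, v₁)` depends only on the first two moments:
`KL(N(m₁, v₁) ‖ N(m₂, v₂)) = (log (v₂ / v₁) + (v₁ + (m₁ - m₂)²) / v₂ - 1) / 2`.
For the Bayes update, `v₂ / v₁ = (1 + βs)⁻¹` and the rest is algebra.
-/

lemma klDiv_eq_integral_of_llr_ae_eq {Ω : Type*} [MeasurableSpace Ω] {μ ν : Measure Ω}
    (hμν : μ ≪ ν) {f : Ω → ℝ} (hf : Integrable f μ) (hllr : llr μ ν =ᵐ[μ] f) :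
    klDiv μ ν = ((∫ x, f x ∂μ : ℝ) : EReal) := by
  rw [klDiv, if_pos ⟨hμν, hf.congr hllr.symm⟩, integral_congr_ae hllr]

namespace ProbabilityTheory

variable {m m₁ m₂ : ℝ} {v v₁ v₂ : ℝ≥0}

lemma integrable_sub_sq_gaussianReal (c : ℝ) :
    Integrable (fun x ↦ (x - c) ^ 2) (gaussianReal m v) :=
  ((memLp_id_gaussianReal 2).sub (memLp_const c)).integrable_sq

lemma integral_sub_sq_gaussianReal (c : ℝ) :
    ∫ x, (x - c) ^ 2 ∂gaussianReal m v = v + (m - c) ^ 2 := by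
  have hX : MemLp (fun x ↦ x - c) 2 (gaussianReal m v) :=
    (memLp_id_gaussianReal 2).sub (memLp_const c)
  have hvar : Var[fun x ↦ x - c; gaussianReal m v] = v :=
    (variance_sub_const (X := fun x ↦ x) measurable_id.aestronglyMeasurable c).trans
      variance_fun_id_gaussianReal
  rw [variance_eq_sub hX, integral_sub (f := fun x ↦ x)
    ((memLp_id_gaussianReal 1).integrable le_rfl) (integrable_const c),
    integral_id_gaussianReal] at hvar
  simp only [integral_const, probReal_univ, smul_eq_mul, one_mul, Pi.pow_apply] at hvar
  linarith

lemma log_gaussianPDFReal (hv : v ≠ 0) (x : ℝ) :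
    log (gaussianPDFReal m v x) = -log (2 * π * v) / 2 - (x - m) ^ 2 / (2 * v) := by
  have hv' : (0 : ℝ) < v := by positivity
  rw [gaussianPDFReal, log_mul (by positivity) (exp_ne_zero _), log_inv, log_exp,
    log_sqrt (by positivity)]
  ring

lemma rnDeriv_gaussianReal_gaussianReal (hv₁ : v₁ ≠ 0) (hv₂ : v₂ ≠ 0) :
    (gaussianReal m₁ v₁).rnDeriv (gaussianReal m₂ v₂) =ᵐ[gaussianReal m₂ v₂]
      fun x ↦ gaussianPDF m₁ v₁ x / gaussianPDF m₂ v₂ x := by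
  have h₂ := gaussianReal_absolutelyContinuous m₂ hv₂
  filter_upwards [Measure.rnDeriv_eq_div (gaussianReal_absolutelyContinuous m₁ hv₁) h₂,
    h₂ (rnDeriv_gaussianReal m₁ v₁), h₂ (rnDeriv_gaussianReal m₂ v₂)] with x hx h₁x h₂x
  rw [hx, h₁x, h₂x]

lemma llr_gaussianReal_gaussianReal (hv₁ : v₁ ≠ 0) (hv₂ : v₂ ≠ 0) :
    llr (gaussianReal m₁ v₁) (gaussianReal m₂ v₂) =ᵐ[gaussianReal m₁ v₁]
      fun x ↦ log (v₂ / v₁) / 2 + (x - m₂) ^ 2 / (2 * v₂) - (x - m₁) ^ 2 / (2 * v₁) := by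
  have h₁₂ : gaussianReal m₁ v₁ ≪ gaussianReal m₂ v₂ :=
    (gaussianReal_absolutelyContinuous m₁ hv₁).trans (gaussianReal_absolutelyContinuous' m₂ hv₂)
  filter_upwards [h₁₂ (rnDeriv_gaussianReal_gaussianReal (m₁ := m₁) (m₂ := m₂) hv₁ hv₂)] with x hx
  have hv₁' : (0 : ℝ) < v₁ := by positivity
  have hv₂' : (0 : ℝ) < v₂ := by positivity
  simp only [llr_def, hx]
  rw [ENNReal.toReal_div, toReal_gaussianPDF, toReal_gaussianPDF,
    log_div (gaussianPDFReal_pos _ _ _ hv₁).ne' (gaussianPDFReal_pos _ _ _ hv₂).ne',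
    log_gaussianPDFReal hv₁, log_gaussianPDFReal hv₂,
    log_div hv₂'.ne' hv₁'.ne', log_mul (by positivity) hv₁'.ne', log_mul (by positivity) hv₂'.ne']
  ring

lemma klDiv_gaussianReal (m₁ m₂ : ℝ) (hv₁ : v₁ ≠ 0) (hv₂ : v₂ ≠ 0) :
    klDiv (gaussianReal m₁ v₁) (gaussianReal m₂ v₂) =
      (((log (v₂ / v₁) + (v₁ + (m₁ - m₂) ^ 2) / v₂ - 1) / 2 : ℝ) : EReal) := by
  have hv₁' : (0 : ℝ) < v₁ := by positivity
  have hv₂' : (0 : ℝ) < v₂ := by positivity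
  have hsq₁ := integrable_sub_sq_gaussianReal (m := m₁) (v := v₁) m₁
  have hsq₂ := integrable_sub_sq_gaussianReal (m := m₁) (v := v₁) m₂
  have hint : Integrable (fun x ↦ log (v₂ / v₁) / 2 + (x - m₂) ^ 2 / (2 * v₂)
      - (x - m₁) ^ 2 / (2 * v₁)) (gaussianReal m₁ v₁) :=
    ((integrable_const _).add (hsq₂.div_const _)).sub (hsq₁.div_const _)
  rw [klDiv_eq_integral_of_llr_ae_eq ((gaussianReal_absolutelyContinuous m₁ hv₁).trans
    (gaussianReal_absolutelyContinuous' m₂ hv₂)) hint (llr_gaussianReal_gaussianReal hv₁ hv₂)]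
  rw [integral_sub, integral_add, integral_const, integral_div, integral_div,
    integral_sub_sq_gaussianReal, integral_sub_sq_gaussianReal]
  · congr 1
    simp only [probReal_univ, smul_eq_mul, one_mul, sub_self]
    field_simp
    ring
  exacts [integrable_const _, hsq₂.div_const _, (integrable_const _).add (hsq₂.div_const _),
    hsq₁.div_const _]

end ProbabilityTheory

/-- **Lemma 4 (supplementary) of the paper.** The KL divergence between the Gaussian
posterior `N(μ, s)` before adding a new sample and the Bayes-updated posterior `N(μ', s')`
after observing `y` with Gaussian noise precision `β`, where
`μ' = μ + s (y − μ)/(s + β⁻¹)` and `s' = s β⁻¹/(s + β⁻¹)`, equals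
`(1/2)βs − (1/2)log(1 + βs) + (1/2)(βs/(s + β⁻¹))(y − μ)²`. -/
theorem klDiv_gaussianReal_bayes_update
    (μ y : ℝ) (s β : ℝ≥0) (hs : 0 < s) (hβ : 0 < β) :
    klDiv (gaussianReal μ s)
        (gaussianReal (μ + (s : ℝ) * (y - μ) / ((s : ℝ) + (β : ℝ)⁻¹)) (s * β⁻¹ / (s + β⁻¹))) =
      (((1 / 2) * (β : ℝ) * (s : ℝ) - (1 / 2) * Real.log (1 + (β : ℝ) * (s : ℝ))
          + (1 / 2) * ((β : ℝ) * (s : ℝ) / ((s : ℝ) + (β : ℝ)⁻¹)) * (y - μ) ^ 2 : ℝ) :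
        EReal) := by
  have hs' : (0 : ℝ) < s := hs
  have hβ' : (0 : ℝ) < β := hβ
  rw [klDiv_gaussianReal _ _ hs.ne' (by positivity)]
  congr 1
  have hratio : ((s * β⁻¹ / (s + β⁻¹) : ℝ≥0) : ℝ) / s = (1 + (β : ℝ) * s)⁻¹ := by
    push_cast
    field_simp
    ring
  rw [hratio, log_inv]
  push_cast
  field_simp
  ring
end

section
/- Let t₀ ≥ 1 and t₁ ≥ 1 be natural numbers and T = t₀ + t₁. For any natural number k with 1 ≤ k, the number of sequences s : Fin T → Bool having exactly t₀ entries equal to false and t₁ entries equal to true and whose number of runs U(s) equals 2k is 2·C(t₀ − 1, k − 1)·C(t₁ − 1, k − 1), where C(n, r) denotes the binomial coefficient. -/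
/-- The number of runs of a finite boolean sequence `s : Fin T → Bool`:
one plus the number of adjacent positions at which the value changes. -/
def numRuns {T : ℕ} (s : Fin T → Bool) : ℕ :=
  1 + (Finset.univ.filter
        (fun p : Fin T × Fin T => (p.1 : ℕ) + 1 = (p.2 : ℕ) ∧ s p.1 ≠ s p.2)).card

/-!
Removing the first entry `b` of a sequence either keeps its number of value changes (the next
entry is `b` as well) or lowers it by one and makes the tail start with `!b`. This gives a
Pascal-type recursion for the number of sequences that start with `b`, have `a` entries `b`,
`c` entries `!b` and `u` changes. Its solution is `N(a, u/2 + 1) * N(c, (u + 1)/2)`, where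
`N(t, m) = C(t - 1, m - 1)` counts the compositions of `t` into `m` positive parts: such a
sequence is made of `u/2 + 1` runs of `b` alternating with `(u + 1)/2` runs of `!b`. With `2k`
runs, i.e. `2k - 1` changes, both starting values contribute `C(t₀ - 1, k - 1) * C(t₁ - 1, k - 1)`.
-/

open Finset

section Tuples

variable {α : Type*} [DecidableEq α] {n : ℕ}

def numChanges (s : Fin (n + 1) → α) : ℕ := #{i : Fin n | s i.castSucc ≠ s i.succ}

lemma card_filter_cons_eq (b c : α) (t : Fin n → α) :
    #{i | (Fin.cons b t : Fin (n + 1) → α) i = c} = #{i | t i = c} + if b = c then 1 else 0 := by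
  rw [Fin.card_filter_univ_succ]
  split_ifs <;> simp_all

lemma numChanges_cons (b : α) (t : Fin (n + 1) → α) :
    numChanges (Fin.cons b t : Fin (n + 2) → α) = numChanges t + if b = t 0 then 0 else 1 := by
  rw [numChanges, Fin.card_filter_univ_succ, numChanges]
  split_ifs <;> simp_all

lemma card_filter_apply_zero_eq [Fintype α] (b : α) (p : (Fin (n + 1) → α) → Prop)
    [DecidablePred p] :
    #{s : Fin (n + 1) → α | s 0 = b ∧ p s} = #{t : Fin n → α | p (Fin.cons b t)} := by
  symm
  refine card_nbij' (fun t : Fin n → α => (Fin.cons b t : Fin (n + 1) → α)) Fin.tail ?_ ?_ ?_ ?_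
  · intro t ht; simp_all
  · intro s hs
    obtain ⟨rfl, hp⟩ : s 0 = b ∧ p s := by simpa using hs
    simpa using hp
  · intro t _; simp
  · intro s hs
    obtain ⟨rfl, -⟩ : s 0 = b ∧ p s := by simpa using hs
    exact Fin.cons_self_tail s

end Tuples

lemma numRuns_eq_numChanges_add_one {n : ℕ} (s : Fin (n + 1) → Bool) :
    numRuns s = numChanges s + 1 := by
  rw [numRuns, add_comm]
  congr 1
  symm
  refine card_nbij (fun i => (i.castSucc, i.succ)) ?_ ?_ ?_
  · intro i hi; simp_all
  · intro i _ j _ h; simpa using h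
  · rintro ⟨p, q⟩ hpq
    simp only [coe_filter, mem_univ, true_and, Set.mem_ofPred_eq] at hpq
    obtain ⟨hsucc, hne⟩ := hpq
    obtain ⟨i, rfl⟩ : ∃ i : Fin n, i.castSucc = p := Fin.exists_castSucc_eq.mpr (by
      rintro rfl; have := q.2; simp only [Fin.val_last] at hsucc; omega)
    obtain rfl : q = i.succ :=
      Fin.ext (by simp only [Fin.val_castSucc, Fin.val_succ] at hsucc ⊢; omega)
    simp_all

-- The counts are taken relative to the first value `b`, so that the tail of such a sequence is
-- again of this form, with `b` or with `!b` as its first value.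
def seqsStartingWith (n : ℕ) (b : Bool) (a c u : ℕ) : Finset (Fin (n + 1) → Bool) :=
  {s | s 0 = b ∧ #{i | s i = b} = a ∧ #{i | s i = !b} = c ∧ numChanges s = u}

lemma card_seqsStartingWith_zero (b : Bool) (a c u : ℕ) :
    #(seqsStartingWith 0 b a c u) = if a = 1 ∧ c = 0 ∧ u = 0 then 1 else 0 := by
  rw [seqsStartingWith, card_filter_apply_zero_eq]
  simp only [card_filter_cons_eq, numChanges, univ_eq_empty, filter_empty, card_empty]
  simp [filter_const, eq_comm, apply_ite card]

lemma seqsStartingWith_zero_left (n : ℕ) (b : Bool) (c u : ℕ) :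
    seqsStartingWith n b 0 c u = ∅ := by
  refine filter_eq_empty_iff.mpr ?_
  rintro s - ⟨h0, hb, -⟩
  exact (card_pos.mpr ⟨0, by simpa using h0⟩).ne' hb

lemma card_seqsStartingWith_succ (n : ℕ) (b : Bool) (a c u : ℕ) :
    #(seqsStartingWith (n + 1) b a c u) =
      #{t : Fin (n + 1) → Bool | #{i | t i = b} + 1 = a ∧ #{i | t i = !b} = c ∧
        numChanges t + (if b = t 0 then 0 else 1) = u} := by
  rw [seqsStartingWith, card_filter_apply_zero_eq]
  simp [card_filter_cons_eq, numChanges_cons]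

lemma card_seqsStartingWith_succ_succ_zero (n : ℕ) (b : Bool) (a c : ℕ) :
    #(seqsStartingWith (n + 1) b (a + 1) c 0) = #(seqsStartingWith n b a c 0) := by
  rw [card_seqsStartingWith_succ, seqsStartingWith]
  congr 1
  refine filter_congr fun t _ => ?_
  cases b <;> cases t 0 <;> simp

lemma card_seqsStartingWith_succ_succ_succ (n : ℕ) (b : Bool) (a c u : ℕ) :
    #(seqsStartingWith (n + 1) b (a + 1) c (u + 1)) =
      #(seqsStartingWith n b a c (u + 1)) + #(seqsStartingWith n (!b) c a u) := by
  rw [card_seqsStartingWith_succ, ← card_filter_add_card_filter_not (p := fun t => t 0 = b),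
    filter_filter, filter_filter, seqsStartingWith, seqsStartingWith]
  congr 2
  · ext t; cases b <;> cases h : t 0 <;> simp [h]
  · ext t; cases b <;> cases h : t 0 <;> simp [h, and_left_comm]

def numCompositions : ℕ → ℕ → ℕ
  | 0, 0 => 1
  | 0, _ + 1 => 0
  | _ + 1, 0 => 0
  | t + 1, m + 1 => t.choose m

lemma numCompositions_succ_succ (t m : ℕ) :
    numCompositions (t + 1) (m + 1) = numCompositions t (m + 1) + numCompositions t m := by
  cases t <;> cases m <;> simp [numCompositions, Nat.choose_succ_succ', add_comm]

theorem card_seqsStartingWith {n a c : ℕ} (h : a + c = n + 1) (b : Bool) (u : ℕ) :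
    #(seqsStartingWith n b a c u) =
      numCompositions a (u / 2 + 1) * numCompositions c ((u + 1) / 2) := by
  induction n generalizing a c b u with
  | zero =>
    rw [card_seqsStartingWith_zero]
    rcases (by omega : a = 1 ∧ c = 0 ∨ a = 0 ∧ c = 1) with ⟨rfl, rfl⟩ | ⟨rfl, rfl⟩
    · rcases u with _ | u
      · rfl
      · simp [numCompositions, show (u + 1 + 1) / 2 = u / 2 + 1 by omega]
    · simp [numCompositions]
  | succ n ih =>
    rcases a with _ | a
    · simp [seqsStartingWith_zero_left, numCompositions]
    rcases u with _ | u
    · rw [card_seqsStartingWith_succ_succ_zero, ih (by omega)]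
      rcases c with _ | c
      · obtain rfl : a = n + 1 := by omega
        simp [numCompositions]
      · simp [numCompositions]
    · rw [card_seqsStartingWith_succ_succ_succ, ih (by omega), ih (by omega),
        show (u + 1 + 1) / 2 = u / 2 + 1 by omega, numCompositions_succ_succ]
      ring

lemma card_filter_numRuns_eq (n t₀ t₁ u : ℕ) :
    #{s : Fin (n + 1) → Bool |
        #{i | s i = false} = t₀ ∧ #{i | s i = true} = t₁ ∧ numRuns s = u + 1} =
      #(seqsStartingWith n false t₀ t₁ u) + #(seqsStartingWith n true t₁ t₀ u) := by
  rw [← card_filter_add_card_filter_not (p := fun s => s 0 = false), filter_filter, filter_filter,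
    seqsStartingWith, seqsStartingWith]
  simp only [numRuns_eq_numChanges_add_one]
  congr 2 <;> ext s <;> simp only [Nat.add_right_cancel_iff, Bool.not_false, Bool.not_true,
    Bool.not_eq_false, mem_filter, mem_univ, true_and] <;> tauto

/-- **Combinatorial count for the Wald–Wolfowitz runs test (even case, Section 4.1 of the
paper).** The number of boolean sequences of length `T = t₀ + t₁` with exactly `t₀` entries
`false` and `t₁` entries `true` having exactly `2k` runs is
`2 · C(t₀−1, k−1) · C(t₁−1, k−1)`. -/
theorem card_sequences_with_even_runs (t₀ t₁ : ℕ) (h₀ : 1 ≤ t₀) (h₁ : 1 ≤ t₁)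
    (k : ℕ) (hk : 1 ≤ k) :
    (Finset.univ.filter (fun s : Fin (t₀ + t₁) → Bool =>
        (Finset.univ.filter (fun i => s i = false)).card = t₀ ∧
        (Finset.univ.filter (fun i => s i = true)).card = t₁ ∧
        numRuns s = 2 * k)).card =
      2 * Nat.choose (t₀ - 1) (k - 1) * Nat.choose (t₁ - 1) (k - 1) := by
  obtain ⟨n, hn⟩ : ∃ n, t₀ + t₁ = n + 1 := ⟨t₀ + t₁ - 1, by omega⟩
  obtain ⟨j, rfl⟩ : ∃ j, k = j + 1 := ⟨k - 1, by omega⟩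
  obtain ⟨a₀, rfl⟩ : ∃ a₀, t₀ = a₀ + 1 := ⟨t₀ - 1, by omega⟩
  obtain ⟨a₁, rfl⟩ : ∃ a₁, t₁ = a₁ + 1 := ⟨t₁ - 1, by omega⟩
  rw [hn, show 2 * (j + 1) = 2 * j + 1 + 1 by ring, card_filter_numRuns_eq,
    card_seqsStartingWith hn, card_seqsStartingWith (by omega),
    show (2 * j + 1) / 2 + 1 = j + 1 by omega, show (2 * j + 1 + 1) / 2 = j + 1 by omega]
  simp only [numCompositions, Nat.add_sub_cancel]
  ring
end

section
/- Let t₀ ≥ 1 and t₁ ≥ 1 be natural numbers and T = t₀ + t₁, and let A be the (finite) set of sequences s : Fin T → Bool having exactly t₀ entries equal to false and t₁ entries equal to true (so |A| = C(T, t₀)). Then the mean number of runs under the uniform distribution on A is (Σ_{s ∈ A} U(s)) / C(T, t₀) = 1 + 2·t₀·t₁/T, i.e., T·Σ_{s ∈ A} U(s) = (T + 2·t₀·t₁)·C(T, t₀). -/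
open Finset

/-- The set of positions where a boolean sequence is `false`. -/
def falseSet {T : ℕ} (s : Fin T → Bool) : Finset (Fin T) := univ.filter (fun k => s k = false)

/-- The sequence determined by a set of `false`-positions. -/
def sOf {T : ℕ} (F : Finset (Fin T)) : Fin T → Bool := fun k => decide (k ∉ F)

lemma falseSet_sOf {T : ℕ} (F : Finset (Fin T)) : falseSet (sOf F) = F := by
  ext k; simp [falseSet, sOf]

lemma sOf_falseSet {T : ℕ} (s : Fin T → Bool) : sOf (falseSet s) = s := by
  funext k; cases h : s k <;> simp [falseSet, sOf, h]

lemma mem_falseSet {T : ℕ} {s : Fin T → Bool} {k : Fin T} : k ∈ falseSet s ↔ s k = false := by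
  simp [falseSet]

lemma card_A {T : ℕ} (t : ℕ) :
    (univ.filter (fun s : Fin T → Bool => (falseSet s).card = t)).card = Nat.choose T t := by
  have h : (univ.filter (fun s : Fin T → Bool => (falseSet s).card = t)).card
      = (Finset.powersetCard t (univ : Finset (Fin T))).card := by
    apply Finset.card_bij' (fun s _ => falseSet s) (fun F _ => sOf F)
    · intro s hs
      simp only [mem_filter, mem_univ, true_and] at hs
      simp [Finset.mem_powersetCard, hs]
    · intro F hF
      simp only [Finset.mem_powersetCard] at hF
      simp [falseSet_sOf, hF.2]
    · intro s _; exact sOf_falseSet s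
    · intro F _; exact falseSet_sOf F
  rw [h, Finset.card_powersetCard]
  simp

lemma count_one {T : ℕ} (t : ℕ) (i j : Fin T) (hij : i ≠ j) :
    (univ.filter (fun s : Fin T → Bool =>
        (falseSet s).card = t + 1 ∧ s i = false ∧ s j = true)).card
      = Nat.choose (T - 2) t := by
  have hcard2 : ((univ.erase j).erase i).card = T - 2 := by
    rw [Finset.card_erase_of_mem (by simp [Finset.mem_erase, hij]),
      Finset.card_erase_of_mem (Finset.mem_univ j)]
    simp; omega
  have h : (univ.filter (fun s : Fin T → Bool =>
        (falseSet s).card = t + 1 ∧ s i = false ∧ s j = true)).card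
      = (Finset.powersetCard t ((univ.erase j).erase i)).card := by
    apply Finset.card_bij' (fun s _ => (falseSet s).erase i) (fun F _ => sOf (insert i F))
    · intro s hs
      simp only [mem_filter, mem_univ, true_and] at hs
      obtain ⟨hc, hsi, hsj⟩ := hs
      rw [Finset.mem_powersetCard]
      constructor
      · intro k hk
        rw [Finset.mem_erase, mem_falseSet] at hk
        rw [Finset.mem_erase, Finset.mem_erase]
        refine ⟨hk.1, ?_, Finset.mem_univ k⟩
        rintro rfl; rw [hk.2] at hsj; exact Bool.false_ne_true hsj
      · rw [Finset.card_erase_of_mem (mem_falseSet.mpr hsi), hc]; omega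
    · intro F hF
      rw [Finset.mem_powersetCard] at hF
      obtain ⟨hsub, hc⟩ := hF
      have hiF : i ∉ F := fun h => (Finset.mem_erase.mp (hsub h)).1 rfl
      have hjF : j ∉ F := fun h => (Finset.mem_erase.mp (Finset.mem_erase.mp (hsub h)).2).1 rfl
      simp only [mem_filter, mem_univ, true_and]
      refine ⟨?_, ?_, ?_⟩
      · rw [falseSet_sOf, Finset.card_insert_of_notMem hiF, hc]
      · simp [sOf]
      · simp [sOf, hjF, Ne.symm hij]
    · intro s hs
      simp only [mem_filter, mem_univ, true_and] at hs
      rw [Finset.insert_erase (mem_falseSet.mpr hs.2.1), sOf_falseSet]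
    · intro F hF
      rw [Finset.mem_powersetCard] at hF
      have hiF : i ∉ F := fun h => (Finset.mem_erase.mp (hF.1 h)).1 rfl
      rw [falseSet_sOf, Finset.erase_insert hiF]
  rw [h, Finset.card_powersetCard, hcard2]

lemma count_ne {T : ℕ} (t₀ : ℕ) (h₀ : 1 ≤ t₀) (i j : Fin T) (hij : i ≠ j) :
    (univ.filter (fun s : Fin T → Bool => (falseSet s).card = t₀ ∧ s i ≠ s j)).card
      = 2 * Nat.choose (T - 2) (t₀ - 1) := by
  obtain ⟨a, rfl⟩ : ∃ a, t₀ = a + 1 := ⟨t₀ - 1, by omega⟩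
  have hsplit : (univ.filter (fun s : Fin T → Bool => (falseSet s).card = a + 1 ∧ s i ≠ s j))
      = (univ.filter (fun s : Fin T → Bool =>
          (falseSet s).card = a + 1 ∧ s i = false ∧ s j = true))
        ∪ (univ.filter (fun s : Fin T → Bool =>
          (falseSet s).card = a + 1 ∧ s j = false ∧ s i = true)) := by
    rw [← Finset.filter_or]
    apply Finset.filter_congr
    intro s _
    cases hi : s i <;> cases hj : s j <;> simp [hi, hj]
  rw [hsplit, Finset.card_union_of_disjoint, count_one a i j hij, count_one a j i (Ne.symm hij)]
  · simp; omega
  · rw [Finset.disjoint_filter]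
    rintro s _ ⟨_, hsi, _⟩ ⟨_, _, hsi'⟩
    rw [hsi] at hsi'; exact Bool.false_ne_true hsi'

lemma card_adj {T : ℕ} :
    (univ.filter (fun p : Fin T × Fin T => (p.1 : ℕ) + 1 = (p.2 : ℕ))).card = T - 1 := by
  have h : (univ.filter (fun p : Fin T × Fin T => (p.1 : ℕ) + 1 = (p.2 : ℕ))).card
      = (Finset.range (T - 1)).card := by
    refine Finset.card_bij' (fun p _ => (p.1 : ℕ))
      (fun n hn => ((⟨n, by simp only [Finset.mem_range] at hn; omega⟩ : Fin T),
        (⟨n + 1, by simp only [Finset.mem_range] at hn; omega⟩ : Fin T))) ?_ ?_ ?_ ?_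
    · intro p hp
      simp only [mem_filter, mem_univ, true_and] at hp
      have := p.2.isLt
      simp only [Finset.mem_range]; omega
    · intro n hn
      simp only [mem_filter, mem_univ, true_and]
    · intro p hp
      simp only [mem_filter, mem_univ, true_and] at hp
      ext <;> simp [hp]
    · intro n hn
      simp
  rw [h, Finset.card_range]

lemma sum_aux {T : ℕ} (t₀ : ℕ) (h₀ : 1 ≤ t₀) :
    ∑ s ∈ univ.filter (fun s : Fin T → Bool => (falseSet s).card = t₀), numRuns s
      = Nat.choose T t₀ + (T - 1) * (2 * Nat.choose (T - 2) (t₀ - 1)) := by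
  have hruns : ∀ s : Fin T → Bool, numRuns s = 1 +
      ((univ.filter (fun p : Fin T × Fin T => (p.1 : ℕ) + 1 = (p.2 : ℕ))).filter
        (fun p => s p.1 ≠ s p.2)).card := by
    intro s; rw [numRuns, Finset.filter_filter]
  simp only [hruns]
  rw [Finset.sum_add_distrib, Finset.sum_const, smul_eq_mul, mul_one, card_A]
  congr 1
  calc ∑ s ∈ univ.filter (fun s : Fin T → Bool => (falseSet s).card = t₀),
        ((univ.filter (fun p : Fin T × Fin T => (p.1 : ℕ) + 1 = (p.2 : ℕ))).filter
          (fun p => s p.1 ≠ s p.2)).card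
      = ∑ s ∈ univ.filter (fun s : Fin T → Bool => (falseSet s).card = t₀),
          ∑ p ∈ univ.filter (fun p : Fin T × Fin T => (p.1 : ℕ) + 1 = (p.2 : ℕ)),
            (if s p.1 ≠ s p.2 then 1 else 0) := by
        simp only [Finset.card_filter]
    _ = ∑ p ∈ univ.filter (fun p : Fin T × Fin T => (p.1 : ℕ) + 1 = (p.2 : ℕ)),
          ∑ s ∈ univ.filter (fun s : Fin T → Bool => (falseSet s).card = t₀),
            (if s p.1 ≠ s p.2 then 1 else 0) := Finset.sum_comm
    _ = ∑ p ∈ univ.filter (fun p : Fin T × Fin T => (p.1 : ℕ) + 1 = (p.2 : ℕ)),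
          ((univ.filter (fun s : Fin T → Bool => (falseSet s).card = t₀)).filter
            (fun s => s p.1 ≠ s p.2)).card := by
        simp only [Finset.card_filter]
    _ = ∑ p ∈ univ.filter (fun p : Fin T × Fin T => (p.1 : ℕ) + 1 = (p.2 : ℕ)),
          2 * Nat.choose (T - 2) (t₀ - 1) := by
        apply Finset.sum_congr rfl
        intro p hp
        simp only [mem_filter, mem_univ, true_and] at hp
        have hne : p.1 ≠ p.2 := by
          intro h; rw [h] at hp; omega
        rw [Finset.filter_filter]
        exact count_ne t₀ h₀ p.1 p.2 hne
    _ = (T - 1) * (2 * Nat.choose (T - 2) (t₀ - 1)) := by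
        rw [Finset.sum_const, card_adj, smul_eq_mul]

lemma arith (t₀ t₁ : ℕ) (h₀ : 1 ≤ t₀) (h₁ : 1 ≤ t₁) :
    (t₀ + t₁) * (Nat.choose (t₀ + t₁) t₀
        + (t₀ + t₁ - 1) * (2 * Nat.choose (t₀ + t₁ - 2) (t₀ - 1)))
      = ((t₀ + t₁) + 2 * t₀ * t₁) * Nat.choose (t₀ + t₁) t₀ := by
  obtain ⟨a, rfl⟩ : ∃ a, t₀ = a + 1 := ⟨t₀ - 1, by omega⟩
  obtain ⟨b, rfl⟩ : ∃ b, t₁ = b + 1 := ⟨t₁ - 1, by omega⟩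
  have e4 : a + 1 + (b + 1) = a + b + 2 := by omega
  rw [e4]
  have e1 : a + b + 2 - 1 = a + b + 1 := by omega
  have e2 : a + b + 2 - 2 = a + b := by omega
  have e3 : a + 1 - 1 = a := by omega
  rw [e1, e2, e3]
  have h1 : (a + b + 1) * Nat.choose (a + b) a = Nat.choose (a + b + 1) (a + 1) * (a + 1) :=
    Nat.add_one_mul_choose_eq (a + b) a
  have h2 : Nat.choose (a + b + 1) (a + 1) = Nat.choose (a + b + 1) b := by
    rw [← Nat.choose_symm (by omega : b ≤ a + b + 1)]; congr 1; omega
  have h3 : (a + b + 2) * Nat.choose (a + b + 1) b = Nat.choose (a + b + 2) (b + 1) * (b + 1) :=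
    Nat.add_one_mul_choose_eq (a + b + 1) b
  have h4 : Nat.choose (a + b + 2) (b + 1) = Nat.choose (a + b + 2) (a + 1) := by
    rw [← Nat.choose_symm (by omega : a + 1 ≤ a + b + 2)]; congr 1; omega
  have key : (a + b + 2) * ((a + b + 1) * Nat.choose (a + b) a)
      = (a + 1) * (b + 1) * Nat.choose (a + b + 2) (a + 1) := by
    calc (a + b + 2) * ((a + b + 1) * Nat.choose (a + b) a)
        = (a + b + 2) * (Nat.choose (a + b + 1) (a + 1) * (a + 1)) := by rw [h1]
      _ = ((a + b + 2) * Nat.choose (a + b + 1) b) * (a + 1) := by rw [h2]; ring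
      _ = (Nat.choose (a + b + 2) (b + 1) * (b + 1)) * (a + 1) := by rw [h3]
      _ = (a + 1) * (b + 1) * Nat.choose (a + b + 2) (a + 1) := by rw [h4]; ring
  calc (a + b + 2) * (Nat.choose (a + b + 2) (a + 1)
        + (a + b + 1) * (2 * Nat.choose (a + b) a))
      = (a + b + 2) * Nat.choose (a + b + 2) (a + 1)
        + 2 * ((a + b + 2) * ((a + b + 1) * Nat.choose (a + b) a)) := by ring
    _ = (a + b + 2) * Nat.choose (a + b + 2) (a + 1)
        + 2 * ((a + 1) * (b + 1) * Nat.choose (a + b + 2) (a + 1)) := by rw [key]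
    _ = ((a + b + 2) + 2 * (a + 1) * (b + 1)) * Nat.choose (a + b + 2) (a + 1) := by ring

/-- **Mean of the Wald–Wolfowitz runs statistic (Section 4.1 of the paper).** Over the set
`A` of boolean sequences of length `T = t₀ + t₁` with exactly `t₀` entries `false` and `t₁`
entries `true` (of cardinality `C(T, t₀)`), the mean number of runs is `1 + 2t₀t₁/T`;
equivalently `T · Σ_{s ∈ A} U(s) = (T + 2t₀t₁) · C(T, t₀)`. -/
theorem sum_numRuns_eq (t₀ t₁ : ℕ) (h₀ : 1 ≤ t₀) (h₁ : 1 ≤ t₁) :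
    (t₀ + t₁) *
        ∑ s ∈ Finset.univ.filter (fun s : Fin (t₀ + t₁) → Bool =>
          (Finset.univ.filter (fun i => s i = false)).card = t₀ ∧
          (Finset.univ.filter (fun i => s i = true)).card = t₁), numRuns s =
      ((t₀ + t₁) + 2 * t₀ * t₁) * Nat.choose (t₀ + t₁) t₀ := by
  have hpred : (Finset.univ.filter (fun s : Fin (t₀ + t₁) → Bool =>
        (Finset.univ.filter (fun i => s i = false)).card = t₀ ∧
        (Finset.univ.filter (fun i => s i = true)).card = t₁))
      = univ.filter (fun s : Fin (t₀ + t₁) → Bool => (falseSet s).card = t₀) := by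
    apply Finset.filter_congr
    intro s _
    have hsum : (univ.filter (fun i => s i = false)).card
        + (univ.filter (fun i => s i = true)).card = t₀ + t₁ := by
      have h2 : (univ.filter (fun i => s i = true))
          = (univ.filter (fun i => ¬ s i = false)) := by
        apply Finset.filter_congr; intro k _; cases s k <;> simp
      rw [h2, Finset.card_filter_add_card_filter_not]
      simp
    simp only [falseSet]
    constructor
    · rintro ⟨h, _⟩; exact h
    · intro h; exact ⟨h, by omega⟩
  rw [hpred, sum_aux t₀ h₀]
  exact arith t₀ t₁ h₀ h₁
end

section
/- Let t₀ ≥ 1 and t₁ ≥ 1 be natural numbers with T = t₀ + t₁ ≥ 2, and let A be the (finite) set of sequences s : Fin T → Bool having exactly t₀ entries equal to false and t₁ entries equal to true (so |A| = C(T, t₀)). Then the variance of the number of runs under the uniform distribution on A equals 2·t₀·t₁·(2·t₀·t₁ − T)/(T²·(T − 1)); that is, as rational numbers, (Σ_{s ∈ A} U(s)²)/C(T, t₀) − (1 + 2·t₀·t₁/T)² = 2·t₀·t₁·(2·t₀·t₁ − T)/(T²·(T − 1)). -/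
open Finset

-- split of a filter card over P and univ \ P
lemma card_filter_split {T : ℕ} (P : Finset (Fin T)) (p : Fin T → Prop) [DecidablePred p] :
    (univ.filter p).card = (P.filter p).card + ((univ \ P).filter p).card := by
  have h : univ.filter p = (P.filter p) ∪ ((univ \ P).filter p) := by
    rw [← filter_union, union_sdiff_of_subset (subset_univ P)]
  rw [h, card_union_of_disjoint]
  exact disjoint_filter_filter (disjoint_sdiff)

lemma card_true_of_false {t₀ t₁ : ℕ} {s : Fin (t₀ + t₁) → Bool}
    (h : (univ.filter (fun i => s i = false)).card = t₀) :
    (univ.filter (fun i => s i = true)).card = t₁ := by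
  have := card_filter_add_card_filter_not (s := (univ : Finset (Fin (t₀+t₁))))
    (p := fun i => s i = false)
  simp only [card_univ, Fintype.card_fin] at this
  have h2 : (univ.filter (fun i => ¬ s i = false)).card = (univ.filter (fun i => s i = true)).card := by
    congr 1
    apply filter_congr
    intro i _
    simp [Bool.not_eq_false]
  omega

/-- The master counting lemma. -/
lemma count_pattern (t₀ t₁ : ℕ) (P : Finset (Fin (t₀+t₁))) (v : Fin (t₀+t₁) → Bool)
    (hf : (P.filter (fun i => v i = false)).card ≤ t₀) :
    (univ.filter (fun s : Fin (t₀+t₁) → Bool =>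
        ((univ.filter (fun i => s i = false)).card = t₀ ∧
         (univ.filter (fun i => s i = true)).card = t₁) ∧ ∀ i ∈ P, s i = v i)).card
      = Nat.choose (t₀ + t₁ - P.card) (t₀ - (P.filter (fun i => v i = false)).card) := by
  set f := (P.filter (fun i => v i = false)).card with hfdef
  have hPcard : (P.filter (fun i => v i = false)).card + (P.filter (fun i => v i = true)).card = P.card := by
    have := card_filter_add_card_filter_not (s := P) (p := fun i => v i = false)
    have h2 : (P.filter (fun i => ¬ v i = false)).card = (P.filter (fun i => v i = true)).card := by
      congr 1; apply filter_congr; intro i _; simp [Bool.not_eq_false]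
    omega
  have key : (univ.filter (fun s : Fin (t₀+t₁) → Bool =>
        ((univ.filter (fun i => s i = false)).card = t₀ ∧
         (univ.filter (fun i => s i = true)).card = t₁) ∧ ∀ i ∈ P, s i = v i)).card
      = ((univ \ P).powersetCard (t₀ - f)).card := by
    apply card_bij' (i := fun s _ => (univ \ P).filter (fun i => s i = false))
      (j := fun S _ => fun i => if i ∈ P then v i else (if i ∈ S then false else true))
    · -- i maps into target
      intro s hs
      simp only [mem_filter, mem_univ, true_and] at hs
      obtain ⟨⟨h0, h1⟩, hv⟩ := hs
      rw [mem_powersetCard]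
      refine ⟨filter_subset _ _, ?_⟩
      have hsplit := card_filter_split P (fun i => s i = false)
      have heq : (P.filter (fun i => s i = false)) = (P.filter (fun i => v i = false)) := by
        apply filter_congr; intro i hi; rw [hv i hi]
      rw [heq] at hsplit
      omega
    · -- j maps into source
      intro S hS
      rw [mem_powersetCard] at hS
      obtain ⟨hsub, hcard⟩ := hS
      simp only [mem_filter, mem_univ, true_and]
      have hvP : ∀ i ∈ P, (if i ∈ P then v i else (if i ∈ S then false else true)) = v i := by
        intro i hi; simp [hi]
      have hoff : ((univ \ P).filter (fun i => (if i ∈ P then v i else (if i ∈ S then false else true)) = false)) = S := by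
        ext x
        simp only [mem_filter, mem_sdiff, mem_univ, true_and]
        constructor
        · rintro ⟨hxP, hx⟩
          rw [if_neg hxP] at hx
          by_contra hxS
          rw [if_neg hxS] at hx
          simp at hx
        · intro hxS
          have hxP : x ∉ P := fun h => (mem_sdiff.mp (hsub hxS)).2 h
          exact ⟨hxP, by rw [if_neg hxP, if_pos hxS]⟩
      have h0 : (univ.filter (fun i => (if i ∈ P then v i else (if i ∈ S then false else true)) = false)).card = t₀ := by
        rw [card_filter_split P, hoff, hcard]
        have : (P.filter (fun i => (if i ∈ P then v i else (if i ∈ S then false else true)) = false))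
            = (P.filter (fun i => v i = false)) := by
          apply filter_congr; intro i hi; rw [hvP i hi]
        rw [this]
        omega
      exact ⟨⟨h0, card_true_of_false h0⟩, hvP⟩
    · -- j ∘ i = id
      intro s hs
      simp only [mem_filter, mem_univ, true_and] at hs
      obtain ⟨⟨h0, h1⟩, hv⟩ := hs
      funext x
      by_cases hxP : x ∈ P
      · rw [if_pos hxP, hv x hxP]
      · rw [if_neg hxP]
        by_cases hx : s x = false
        · rw [if_pos (by simp [mem_filter, mem_sdiff, hxP, hx]), hx]
        · rw [if_neg (by simp [mem_filter, mem_sdiff, hxP, hx])]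
          cases h : s x
          · exact absurd h hx
          · rfl
    · -- i ∘ j = id
      intro S hS
      rw [mem_powersetCard] at hS
      obtain ⟨hsub, hcard⟩ := hS
      ext x
      simp only [mem_filter, mem_sdiff, mem_univ, true_and]
      constructor
      · rintro ⟨hxP, hx⟩
        rw [if_neg hxP] at hx
        by_contra hxS
        rw [if_neg hxS] at hx
        simp at hx
      · intro hxS
        have hxP : x ∉ P := fun h => (mem_sdiff.mp (hsub hxS)).2 h
        exact ⟨hxP, by rw [if_neg hxP, if_pos hxS]⟩
  rw [key, card_powersetCard]
  congr 1
  rw [card_sdiff_of_subset (subset_univ P), card_univ, Fintype.card_fin]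

lemma count_pattern_zero (t₀ t₁ : ℕ) (P : Finset (Fin (t₀+t₁))) (v : Fin (t₀+t₁) → Bool)
    (hf : t₀ < (P.filter (fun i => v i = false)).card) :
    (univ.filter (fun s : Fin (t₀+t₁) → Bool =>
        ((univ.filter (fun i => s i = false)).card = t₀ ∧
         (univ.filter (fun i => s i = true)).card = t₁) ∧ ∀ i ∈ P, s i = v i)).card = 0 := by
  rw [card_eq_zero, filter_eq_empty_iff]
  rintro s _ ⟨⟨h0, _⟩, hv⟩
  have hle : (P.filter (fun i => v i = false)).card ≤ (univ.filter (fun i => s i = false)).card := by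
    apply card_le_card
    intro x hx
    simp only [mem_filter] at hx ⊢
    exact ⟨mem_univ x, by rw [hv x hx.1]; exact hx.2⟩
  omega

section patterns
variable (t₀ t₁ : ℕ)

/-- membership predicate for A, as a definition to keep statements short -/
def inA (s : Fin (t₀+t₁) → Bool) : Prop :=
  ((univ.filter (fun i => s i = false)).card = t₀ ∧
   (univ.filter (fun i => s i = true)).card = t₁)

instance : DecidablePred (inA t₀ t₁) := fun s =>
  inferInstanceAs (Decidable ((univ.filter (fun i => s i = false)).card = t₀ ∧
   (univ.filter (fun i => s i = true)).card = t₁))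

lemma count_pattern' (P : Finset (Fin (t₀+t₁))) (v : Fin (t₀+t₁) → Bool)
    (hf : (P.filter (fun i => v i = false)).card ≤ t₀) :
    (univ.filter (fun s : Fin (t₀+t₁) → Bool => inA t₀ t₁ s ∧ ∀ i ∈ P, s i = v i)).card
      = Nat.choose (t₀ + t₁ - P.card) (t₀ - (P.filter (fun i => v i = false)).card) :=
  count_pattern t₀ t₁ P v hf

lemma count_pattern_zero' (P : Finset (Fin (t₀+t₁))) (v : Fin (t₀+t₁) → Bool)
    (hf : t₀ < (P.filter (fun i => v i = false)).card) :
    (univ.filter (fun s : Fin (t₀+t₁) → Bool => inA t₀ t₁ s ∧ ∀ i ∈ P, s i = v i)).card = 0 :=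
  count_pattern_zero t₀ t₁ P v hf

lemma count2 (a b : Fin (t₀+t₁)) (hab : a ≠ b) (u w : Bool) (huw : u ≠ w) (h₀ : 1 ≤ t₀) :
    (univ.filter (fun s : Fin (t₀+t₁) → Bool => inA t₀ t₁ s ∧ (s a = u ∧ s b = w))).card
      = Nat.choose (t₀ + t₁ - 2) (t₀ - 1) := by
  have hcardP : ({a, b} : Finset (Fin (t₀+t₁))).card = 2 := by
    rw [card_insert_of_notMem (by simpa using hab), card_singleton]
  have hfP : (({a, b} : Finset (Fin (t₀+t₁))).filter
      (fun i => (if i = a then u else w) = false)).card = 1 := by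
    cases u <;> cases w
    · exact absurd rfl huw
    · simp [filter_insert, filter_singleton, Ne.symm hab]
    · simp [filter_insert, filter_singleton, Ne.symm hab]
    · exact absurd rfl huw
  have key := count_pattern' t₀ t₁ {a, b} (fun x => if x = a then u else w)
    (by beta_reduce; omega)
  beta_reduce at key
  rw [hfP, hcardP] at key
  rw [← key]
  congr 1
  apply filter_congr
  intro s _
  constructor
  · rintro ⟨h, ha, hb⟩
    refine ⟨h, fun i hi => ?_⟩
    rcases mem_insert.mp hi with rfl | hi
    · simpa using ha
    · rw [mem_singleton] at hi; subst hi
      rw [if_neg (Ne.symm hab)]; exact hb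
  · rintro ⟨h, hv⟩
    refine ⟨h, by simpa using hv a (mem_insert_self a _), ?_⟩
    have := hv b (by simp)
    rwa [if_neg (Ne.symm hab)] at this

lemma pred3 (a b c : Fin (t₀+t₁)) (hab : a ≠ b) (hac : a ≠ c) (hbc : b ≠ c)
    (u w z : Bool) (s : Fin (t₀+t₁) → Bool) :
    (s a = u ∧ s b = w ∧ s c = z) ↔
    (∀ i ∈ ({a, b, c} : Finset (Fin (t₀+t₁))), s i =
      (if i = a then u else if i = b then w else z)) := by
  constructor
  · rintro ⟨ha, hb, hc⟩ i hi
    simp only [mem_insert, mem_singleton] at hi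
    rcases hi with rfl | rfl | rfl
    · simpa using ha
    · rw [if_neg (Ne.symm hab), if_pos rfl]; exact hb
    · rw [if_neg (Ne.symm hac), if_neg (Ne.symm hbc)]; exact hc
  · intro hv
    refine ⟨by simpa using hv a (by simp), ?_, ?_⟩
    · have := hv b (by simp)
      rwa [if_neg (Ne.symm hab), if_pos rfl] at this
    · have := hv c (by simp)
      rwa [if_neg (Ne.symm hac), if_neg (Ne.symm hbc)] at this

lemma count3 (f : ℕ) (a b c : Fin (t₀+t₁)) (hab : a ≠ b) (hac : a ≠ c) (hbc : b ≠ c)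
    (u w z : Bool)
    (hfP : (({a, b, c} : Finset (Fin (t₀+t₁))).filter
      (fun i => (if i = a then u else if i = b then w else z) = false)).card = f)
    (hf : f ≤ t₀) :
    (univ.filter (fun s : Fin (t₀+t₁) → Bool =>
        inA t₀ t₁ s ∧ (s a = u ∧ s b = w ∧ s c = z))).card
      = Nat.choose (t₀ + t₁ - 3) (t₀ - f) := by
  have hcardP : ({a, b, c} : Finset (Fin (t₀+t₁))).card = 3 := by
    rw [card_insert_of_notMem (by simp [hab, hac]),
        card_insert_of_notMem (by simpa using hbc), card_singleton]
  have key := count_pattern' t₀ t₁ {a, b, c}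
    (fun x => if x = a then u else if x = b then w else z) (by beta_reduce; rw [hfP]; exact hf)
  beta_reduce at key
  rw [hfP, hcardP] at key
  rw [← key]
  congr 1
  exact filter_congr fun s _ => by
    rw [pred3 t₀ t₁ a b c hab hac hbc u w z s]

lemma count3_zero (f : ℕ) (a b c : Fin (t₀+t₁)) (hab : a ≠ b) (hac : a ≠ c) (hbc : b ≠ c)
    (u w z : Bool)
    (hfP : (({a, b, c} : Finset (Fin (t₀+t₁))).filter
      (fun i => (if i = a then u else if i = b then w else z) = false)).card = f)
    (hf : t₀ < f) :
    (univ.filter (fun s : Fin (t₀+t₁) → Bool =>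
        inA t₀ t₁ s ∧ (s a = u ∧ s b = w ∧ s c = z))).card = 0 := by
  have key := count_pattern_zero' t₀ t₁ {a, b, c}
    (fun x => if x = a then u else if x = b then w else z) (by beta_reduce; rw [hfP]; exact hf)
  beta_reduce at key
  rw [← key]
  congr 1
  exact filter_congr fun s _ => by
    rw [pred3 t₀ t₁ a b c hab hac hbc u w z s]

lemma pred4 (a b c d : Fin (t₀+t₁)) (hab : a ≠ b) (hac : a ≠ c) (had : a ≠ d)
    (hbc : b ≠ c) (hbd : b ≠ d) (hcd : c ≠ d)
    (u w y z : Bool) (s : Fin (t₀+t₁) → Bool) :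
    (s a = u ∧ s b = w ∧ s c = y ∧ s d = z) ↔
    (∀ i ∈ ({a, b, c, d} : Finset (Fin (t₀+t₁))), s i =
      (if i = a then u else if i = b then w else if i = c then y else z)) := by
  constructor
  · rintro ⟨ha, hb, hc, hd⟩ i hi
    simp only [mem_insert, mem_singleton] at hi
    rcases hi with rfl | rfl | rfl | rfl
    · simpa using ha
    · rw [if_neg (Ne.symm hab), if_pos rfl]; exact hb
    · rw [if_neg (Ne.symm hac), if_neg (Ne.symm hbc), if_pos rfl]; exact hc
    · rw [if_neg (Ne.symm had), if_neg (Ne.symm hbd), if_neg (Ne.symm hcd)]; exact hd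
  · intro hv
    refine ⟨by simpa using hv a (by simp), ?_, ?_, ?_⟩
    · have := hv b (by simp)
      rwa [if_neg (Ne.symm hab), if_pos rfl] at this
    · have := hv c (by simp)
      rwa [if_neg (Ne.symm hac), if_neg (Ne.symm hbc), if_pos rfl] at this
    · have := hv d (by simp)
      rwa [if_neg (Ne.symm had), if_neg (Ne.symm hbd), if_neg (Ne.symm hcd)] at this

lemma count4 (f : ℕ) (a b c d : Fin (t₀+t₁)) (hab : a ≠ b) (hac : a ≠ c) (had : a ≠ d)
    (hbc : b ≠ c) (hbd : b ≠ d) (hcd : c ≠ d) (u w y z : Bool)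
    (hfP : (({a, b, c, d} : Finset (Fin (t₀+t₁))).filter
      (fun i => (if i = a then u else if i = b then w else if i = c then y else z) = false)).card = f)
    (hf : f ≤ t₀) :
    (univ.filter (fun s : Fin (t₀+t₁) → Bool =>
        inA t₀ t₁ s ∧ (s a = u ∧ s b = w ∧ s c = y ∧ s d = z))).card
      = Nat.choose (t₀ + t₁ - 4) (t₀ - f) := by
  have hcardP : ({a, b, c, d} : Finset (Fin (t₀+t₁))).card = 4 := by
    rw [card_insert_of_notMem (by simp [hab, hac, had]),
        card_insert_of_notMem (by simp [hbc, hbd]),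
        card_insert_of_notMem (by simpa using hcd), card_singleton]
  have key := count_pattern' t₀ t₁ {a, b, c, d}
    (fun x => if x = a then u else if x = b then w else if x = c then y else z)
    (by beta_reduce; rw [hfP]; exact hf)
  beta_reduce at key
  rw [hfP, hcardP] at key
  rw [← key]
  congr 1
  exact filter_congr fun s _ => by
    rw [pred4 t₀ t₁ a b c d hab hac had hbc hbd hcd u w y z s]

lemma count4_zero (f : ℕ) (a b c d : Fin (t₀+t₁)) (hab : a ≠ b) (hac : a ≠ c) (had : a ≠ d)
    (hbc : b ≠ c) (hbd : b ≠ d) (hcd : c ≠ d) (u w y z : Bool)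
    (hfP : (({a, b, c, d} : Finset (Fin (t₀+t₁))).filter
      (fun i => (if i = a then u else if i = b then w else if i = c then y else z) = false)).card = f)
    (hf : t₀ < f) :
    (univ.filter (fun s : Fin (t₀+t₁) → Bool =>
        inA t₀ t₁ s ∧ (s a = u ∧ s b = w ∧ s c = y ∧ s d = z))).card = 0 := by
  have key := count_pattern_zero' t₀ t₁ {a, b, c, d}
    (fun x => if x = a then u else if x = b then w else if x = c then y else z)
    (by beta_reduce; rw [hfP]; exact hf)
  beta_reduce at key
  rw [← key]
  congr 1
  exact filter_congr fun s _ => by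
    rw [pred4 t₀ t₁ a b c d hab hac had hbc hbd hcd u w y z s]

end patterns

section ratios

lemma Qratio1 (p q : ℕ) :
    ((p+q+2).choose (p+1) : ℚ) * ((p:ℚ)+1) * ((q:ℚ)+1)
      = ((p+q).choose p : ℚ) * ((p:ℚ)+(q:ℚ)+2) * ((p:ℚ)+(q:ℚ)+1) := by
  rw [Nat.cast_choose ℚ (by omega : p ≤ p + q), Nat.cast_choose ℚ (by omega : p+1 ≤ p + q + 2),
    show p + q - p = q by omega, show p + q + 2 - (p+1) = q + 1 by omega,
    show p+q+2 = (p+q+1)+1 by ring, show p+q+1 = (p+q)+1 by ring,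
    Nat.factorial_succ, Nat.factorial_succ, Nat.factorial_succ p, Nat.factorial_succ q]
  have h1 : ((p+q).factorial : ℚ) ≠ 0 := by positivity
  have h2 : ((p).factorial : ℚ) ≠ 0 := by positivity
  have h3 : ((q).factorial : ℚ) ≠ 0 := by positivity
  push_cast
  field_simp
  ring

lemma Qratio2F (p q : ℕ) :
    ((p+q+3).choose (p+2) : ℚ) * (((p:ℚ)+2) * ((p:ℚ)+1) * ((q:ℚ)+1))
      = ((p+q).choose p : ℚ) * (((p:ℚ)+(q:ℚ)+3) * ((p:ℚ)+(q:ℚ)+2) * ((p:ℚ)+(q:ℚ)+1)) := by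
  rw [Nat.cast_choose ℚ (by omega : p ≤ p + q), Nat.cast_choose ℚ (by omega : p+2 ≤ p + q + 3),
    show p + q - p = q by omega, show p + q + 3 - (p+2) = q + 1 by omega,
    show p+q+3 = ((p+q)+1+1)+1 by ring, show p+2 = (p+1)+1 by ring,
    Nat.factorial_succ ((p+q)+1+1), Nat.factorial_succ ((p+q)+1), Nat.factorial_succ (p+q),
    Nat.factorial_succ (p+1), Nat.factorial_succ p, Nat.factorial_succ q]
  have h1 : ((p+q).factorial : ℚ) ≠ 0 := by positivity
  have h2 : ((p).factorial : ℚ) ≠ 0 := by positivity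
  have h3 : ((q).factorial : ℚ) ≠ 0 := by positivity
  push_cast
  field_simp
  ring

lemma Qratio2T (p q : ℕ) :
    ((p+q+3).choose (p+1) : ℚ) * (((p:ℚ)+1) * ((q:ℚ)+2) * ((q:ℚ)+1))
      = ((p+q).choose p : ℚ) * (((p:ℚ)+(q:ℚ)+3) * ((p:ℚ)+(q:ℚ)+2) * ((p:ℚ)+(q:ℚ)+1)) := by
  rw [Nat.cast_choose ℚ (by omega : p ≤ p + q), Nat.cast_choose ℚ (by omega : p+1 ≤ p + q + 3),
    show p + q - p = q by omega, show p + q + 3 - (p+1) = (q+1)+1 by omega,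
    show p+q+3 = ((p+q)+1+1)+1 by ring,
    Nat.factorial_succ ((p+q)+1+1), Nat.factorial_succ ((p+q)+1), Nat.factorial_succ (p+q),
    Nat.factorial_succ (q+1), Nat.factorial_succ p, Nat.factorial_succ q]
  have h1 : ((p+q).factorial : ℚ) ≠ 0 := by positivity
  have h2 : ((p).factorial : ℚ) ≠ 0 := by positivity
  have h3 : ((q).factorial : ℚ) ≠ 0 := by positivity
  push_cast
  field_simp
  ring

lemma Qratio4 (p q : ℕ) :
    ((p+q+4).choose (p+2) : ℚ) * (((p:ℚ)+2) * ((p:ℚ)+1) * ((q:ℚ)+2) * ((q:ℚ)+1))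
      = ((p+q).choose p : ℚ) * (((p:ℚ)+(q:ℚ)+4) * ((p:ℚ)+(q:ℚ)+3) * ((p:ℚ)+(q:ℚ)+2) * ((p:ℚ)+(q:ℚ)+1)) := by
  rw [Nat.cast_choose ℚ (by omega : p ≤ p + q), Nat.cast_choose ℚ (by omega : p+2 ≤ p + q + 4),
    show p + q - p = q by omega, show p + q + 4 - (p+2) = (q+1)+1 by omega,
    show p+q+4 = (((p+q)+1+1)+1)+1 by ring, show p+2 = (p+1)+1 by ring,
    Nat.factorial_succ ((p+q)+1+1+1), Nat.factorial_succ ((p+q)+1+1),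
    Nat.factorial_succ ((p+q)+1), Nat.factorial_succ (p+q),
    Nat.factorial_succ (p+1), Nat.factorial_succ (q+1),
    Nat.factorial_succ p, Nat.factorial_succ q]
  have h1 : ((p+q).factorial : ℚ) ≠ 0 := by positivity
  have h2 : ((p).factorial : ℚ) ≠ 0 := by positivity
  have h3 : ((q).factorial : ℚ) ≠ 0 := by positivity
  push_cast
  field_simp
  ring

end ratios

section Nvals
variable (t₀ t₁ : ℕ)

lemma card_filter_and_or {α : Type*} [DecidableEq α] (s : Finset α)
    (r p q : α → Prop) [DecidablePred r] [DecidablePred p] [DecidablePred q]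
    (h : ∀ x, ¬ (p x ∧ q x)) :
    (s.filter (fun x => r x ∧ (p x ∨ q x))).card
      = (s.filter (fun x => r x ∧ p x)).card + (s.filter (fun x => r x ∧ q x)).card := by
  rw [← card_union_of_disjoint, ← filter_or]
  · congr 1
    apply filter_congr
    intro x _
    tauto
  · rw [disjoint_left]
    intro x hx hx'
    simp only [mem_filter] at hx hx'
    exact h x ⟨hx.2.2, hx'.2.2⟩

lemma Ncard2 (h₀ : 1 ≤ t₀) (a b : Fin (t₀+t₁)) (hab : a ≠ b) :
    (univ.filter (fun s : Fin (t₀+t₁) → Bool => inA t₀ t₁ s ∧ s a ≠ s b)).card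
      = 2 * Nat.choose (t₀+t₁-2) (t₀-1) := by
  have hb : ∀ x y : Bool, (x ≠ y) ↔ ((x = false ∧ y = true) ∨ (x = true ∧ y = false)) := by decide
  rw [filter_congr (fun s _ => by rw [hb (s a) (s b)])]
  rw [card_filter_and_or _ _ _ _ (by rintro s ⟨⟨h1,_⟩,⟨h2,_⟩⟩; rw [h1] at h2; exact Bool.noConfusion h2)]
  rw [count2 t₀ t₁ a b hab false true (by decide) h₀,
      count2 t₀ t₁ a b hab true false (by decide) h₀]
  ring

lemma Ncard3 (h₀ : 1 ≤ t₀) (a b c : Fin (t₀+t₁)) (hab : a ≠ b) (hac : a ≠ c) (hbc : b ≠ c) :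
    (univ.filter (fun s : Fin (t₀+t₁) → Bool => inA t₀ t₁ s ∧ (s a ≠ s b ∧ s b ≠ s c))).card
      = (if 2 ≤ t₀ then Nat.choose (t₀+t₁-3) (t₀-2) else 0) + Nat.choose (t₀+t₁-3) (t₀-1) := by
  have hb : ∀ x y z : Bool, (x ≠ y ∧ y ≠ z) ↔
      ((x = false ∧ y = true ∧ z = false) ∨ (x = true ∧ y = false ∧ z = true)) := by decide
  rw [filter_congr (fun s _ => by rw [hb (s a) (s b) (s c)])]
  rw [card_filter_and_or _ _ _ _ (by rintro s ⟨⟨h1,_⟩,⟨h2,_⟩⟩; rw [h1] at h2; exact Bool.noConfusion h2)]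
  have hfF : (({a, b, c} : Finset (Fin (t₀+t₁))).filter
      (fun i => (if i = a then false else if i = b then true else false) = false)).card = 2 := by
    rw [filter_insert, filter_insert, filter_singleton]
    simp only [if_pos rfl, if_neg (Ne.symm hab), if_neg (Ne.symm hac), if_neg (Ne.symm hbc)]
    simp [card_insert_of_notMem, hac]
  have hfT : (({a, b, c} : Finset (Fin (t₀+t₁))).filter
      (fun i => (if i = a then true else if i = b then false else true) = false)).card = 1 := by
    rw [filter_insert, filter_insert, filter_singleton]
    simp only [if_pos rfl, if_neg (Ne.symm hab), if_neg (Ne.symm hac), if_neg (Ne.symm hbc)]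
    simp
  rw [count3 t₀ t₁ 1 a b c hab hac hbc true false true hfT h₀]
  by_cases h2 : 2 ≤ t₀
  · rw [count3 t₀ t₁ 2 a b c hab hac hbc false true false hfF h2, if_pos h2]
  · rw [count3_zero t₀ t₁ 2 a b c hab hac hbc false true false hfF (by omega), if_neg h2]

lemma Ncard4 (h₀ : 1 ≤ t₀) (a b c d : Fin (t₀+t₁)) (hab : a ≠ b) (hac : a ≠ c) (had : a ≠ d)
    (hbc : b ≠ c) (hbd : b ≠ d) (hcd : c ≠ d) :
    (univ.filter (fun s : Fin (t₀+t₁) → Bool => inA t₀ t₁ s ∧ (s a ≠ s b ∧ s c ≠ s d))).card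
      = 4 * (if 2 ≤ t₀ then Nat.choose (t₀+t₁-4) (t₀-2) else 0) := by
  have hb : ∀ x y z w : Bool, (x ≠ y ∧ z ≠ w) ↔
      ((((x = false ∧ y = true ∧ z = false ∧ w = true) ∨
         (x = false ∧ y = true ∧ z = true ∧ w = false)) ∨
         (x = true ∧ y = false ∧ z = false ∧ w = true)) ∨
         (x = true ∧ y = false ∧ z = true ∧ w = false)) := by decide
  rw [filter_congr (fun s _ => by rw [hb (s a) (s b) (s c) (s d)])]
  rw [card_filter_and_or _ _ _ _ (by
    rintro s ⟨(⟨h1,_⟩|⟨h1,_⟩)|⟨_,_,h1,_⟩, ⟨h2,_,h3,_⟩⟩ <;>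
      [skip; skip; rw [h1] at h3] <;> first
      | (rw [h1] at h2; exact Bool.noConfusion h2)
      | exact Bool.noConfusion h3)]
  rw [card_filter_and_or _ _ _ _ (by
    rintro s ⟨⟨h1,_⟩|⟨h1,_⟩, ⟨h2,_⟩⟩ <;> rw [h1] at h2 <;> exact Bool.noConfusion h2)]
  rw [card_filter_and_or _ _ _ _ (by
    rintro s ⟨⟨_,_,h1,_⟩, ⟨_,_,h2,_⟩⟩; rw [h1] at h2; exact Bool.noConfusion h2)]
  have red : ∀ u w y z : Bool, ∀ i ∈ ({a,b,c,d} : Finset (Fin (t₀+t₁))), True := by simp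
  have hf1 : (({a, b, c, d} : Finset (Fin (t₀+t₁))).filter
      (fun i => (if i = a then false else if i = b then true else if i = c then false else true) = false)).card = 2 := by
    rw [filter_insert, filter_insert, filter_insert, filter_singleton]
    simp only [if_pos rfl, if_neg (Ne.symm hab), if_neg (Ne.symm hac), if_neg (Ne.symm hbc),
      if_neg (Ne.symm had), if_neg (Ne.symm hbd), if_neg (Ne.symm hcd)]
    simp [card_insert_of_notMem, hac]
  have hf2 : (({a, b, c, d} : Finset (Fin (t₀+t₁))).filter
      (fun i => (if i = a then false else if i = b then true else if i = c then true else false) = false)).card = 2 := by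
    rw [filter_insert, filter_insert, filter_insert, filter_singleton]
    simp only [if_pos rfl, if_neg (Ne.symm hab), if_neg (Ne.symm hac), if_neg (Ne.symm hbc),
      if_neg (Ne.symm had), if_neg (Ne.symm hbd), if_neg (Ne.symm hcd)]
    simp [card_insert_of_notMem, had]
  have hf3 : (({a, b, c, d} : Finset (Fin (t₀+t₁))).filter
      (fun i => (if i = a then true else if i = b then false else if i = c then false else true) = false)).card = 2 := by
    rw [filter_insert, filter_insert, filter_insert, filter_singleton]
    simp only [if_pos rfl, if_neg (Ne.symm hab), if_neg (Ne.symm hac), if_neg (Ne.symm hbc),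
      if_neg (Ne.symm had), if_neg (Ne.symm hbd), if_neg (Ne.symm hcd)]
    simp [card_insert_of_notMem, hbc]
  have hf4 : (({a, b, c, d} : Finset (Fin (t₀+t₁))).filter
      (fun i => (if i = a then true else if i = b then false else if i = c then true else false) = false)).card = 2 := by
    rw [filter_insert, filter_insert, filter_insert, filter_singleton]
    simp only [if_pos rfl, if_neg (Ne.symm hab), if_neg (Ne.symm hac), if_neg (Ne.symm hbc),
      if_neg (Ne.symm had), if_neg (Ne.symm hbd), if_neg (Ne.symm hcd)]
    simp [card_insert_of_notMem, hbd]
  by_cases h2 : 2 ≤ t₀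
  · rw [count4 t₀ t₁ 2 a b c d hab hac had hbc hbd hcd false true false true hf1 h2,
        count4 t₀ t₁ 2 a b c d hab hac had hbc hbd hcd false true true false hf2 h2,
        count4 t₀ t₁ 2 a b c d hab hac had hbc hbd hcd true false false true hf3 h2,
        count4 t₀ t₁ 2 a b c d hab hac had hbc hbd hcd true false true false hf4 h2,
        if_pos h2]
    ring
  · rw [count4_zero t₀ t₁ 2 a b c d hab hac had hbc hbd hcd false true false true hf1 (by omega),
        count4_zero t₀ t₁ 2 a b c d hab hac had hbc hbd hcd false true true false hf2 (by omega),
        count4_zero t₀ t₁ 2 a b c d hab hac had hbc hbd hcd true false false true hf3 (by omega),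
        count4_zero t₀ t₁ 2 a b c d hab hac had hbc hbd hcd true false true false hf4 (by omega),
        if_neg h2]
end Nvals

section sums

/-- the set of adjacent index pairs -/
def Dset (T : ℕ) : Finset (Fin T × Fin T) :=
  univ.filter (fun p => (p.1 : ℕ) + 1 = (p.2 : ℕ))

lemma mem_Dset {T : ℕ} (p : Fin T × Fin T) : p ∈ Dset T ↔ (p.1 : ℕ) + 1 = (p.2 : ℕ) := by
  simp [Dset]

lemma sum_Dset {M : Type*} [AddCommMonoid M] (T : ℕ) (f : ℕ → M) :
    ∑ p ∈ Dset T, f (p.1 : ℕ) = ∑ n ∈ Finset.range (T-1), f n := by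
  refine Finset.sum_bij' (fun p _ => (p.1 : ℕ))
    (fun n hn => (⟨n, by simp only [mem_range] at hn; omega⟩,
                  ⟨n+1, by simp only [mem_range] at hn; omega⟩)) ?_ ?_ ?_ ?_ ?_
  · intro p hp
    rw [mem_Dset] at hp
    show ((p.1 : ℕ)) ∈ Finset.range (T-1)
    rw [mem_range]
    have := p.2.isLt
    omega
  · intro n hn
    rw [mem_Dset]
  · intro p hp
    rw [mem_Dset] at hp
    show ((⟨(p.1:ℕ), _⟩ : Fin T), (⟨(p.1:ℕ)+1, _⟩ : Fin T)) = p
    ext <;> simp <;> omega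
  · intro n hn
    rfl
  · intro p hp
    rfl

lemma sum_row (k A1 A2 : ℕ) (hk : 1 ≤ k) :
    ∑ n ∈ Finset.range k, (if k = n+1 then A1 else A2) = A1 + (k-1) * A2 := by
  rw [Finset.sum_ite, sum_const, sum_const, smul_eq_mul, smul_eq_mul]
  have h1 : (Finset.range k).filter (fun n => k = n+1) = {k-1} := by
    ext n; simp only [mem_filter, mem_range, mem_singleton]; omega
  have hcards := card_filter_add_card_filter_not
    (s := Finset.range k) (p := fun n => k = n+1)
  rw [h1] at hcards ⊢
  rw [card_singleton, card_range] at hcards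
  rw [card_singleton, show ((Finset.range k).filter (fun n => ¬ k = n+1)).card = k - 1 by omega]
  omega

lemma sum_gg (k A0 A1 A2 : ℕ) :
    ∑ n ∈ Finset.range k, ∑ m ∈ Finset.range k,
        (if m = n then A0 else if m = n+1 ∨ n = m+1 then A1 else A2)
      = k * A0 + 2 * ((k-1) * A1) + (k-1)*(k-2) * A2 := by
  induction k with
  | zero => simp
  | succ k ih =>
    rw [Finset.sum_range_succ]
    rw [Finset.sum_range_succ]
    have hrows : ∀ n ∈ Finset.range k,
        (∑ m ∈ Finset.range k, (if m = n then A0 else if m = n+1 ∨ n = m+1 then A1 else A2))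
          + (if (k:ℕ) = n then A0 else if k = n+1 ∨ n = k+1 then A1 else A2)
        = (∑ m ∈ Finset.range k, (if m = n then A0 else if m = n+1 ∨ n = m+1 then A1 else A2))
          + (if k = n+1 then A1 else A2) := by
      intro n hn
      rw [mem_range] at hn
      congr 1
      split_ifs <;> omega
    rw [Finset.sum_congr rfl (fun n hn => by rw [Finset.sum_range_succ, hrows n hn])]
    rw [Finset.sum_add_distrib, ih]
    have hcol : ∀ m ∈ Finset.range k,
        (if m = (k:ℕ) then A0 else if m = k+1 ∨ k = m+1 then A1 else A2)
        = (if k = m+1 then A1 else A2) := by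
      intro m hm
      rw [mem_range] at hm
      split_ifs <;> omega
    rw [Finset.sum_congr rfl hcol]
    rw [if_pos rfl]
    rcases Nat.eq_zero_or_pos k with rfl | hk
    · simp
    · rw [sum_row k A1 A2 hk]
      rcases Nat.exists_eq_add_of_le hk with ⟨j, rfl⟩
      simp only [Nat.add_sub_cancel_left, show 1+j+1-1 = 1+j by omega,
        show 1+j-1 = j by omega, show 1+j+1-2 = j by omega, show 1+j-2 = j-1 by omega]
      rcases Nat.eq_zero_or_pos j with rfl | hj
      · simp; ring
      · rcases Nat.exists_eq_add_of_le hj with ⟨i, rfl⟩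
        simp only [show 1+i-1 = i by omega]
        ring
end sums

lemma ite_one_mul_ite_one (P Q : Prop) [Decidable P] [Decidable Q] :
    (if P then (1:ℕ) else 0) * (if Q then (1:ℕ) else 0) = if P ∧ Q then 1 else 0 := by
  split_ifs <;> simp_all

lemma cardA (t₀ t₁ : ℕ) :
    (univ.filter (fun s : Fin (t₀+t₁) → Bool => inA t₀ t₁ s)).card = Nat.choose (t₀+t₁) t₀ := by
  have h := count_pattern' t₀ t₁ ∅ (fun _ => false) (by simp)
  simp only [Finset.card_empty, Nat.sub_zero, Finset.filter_empty, Finset.notMem_empty] at h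
  rw [← h]
  congr 1
  apply filter_congr
  intro s _
  simp

lemma total_sum (t₀ t₁ : ℕ) (h₀ : 1 ≤ t₀) (h₁ : 1 ≤ t₁) :
    ∑ s ∈ univ.filter (fun s : Fin (t₀+t₁) → Bool => inA t₀ t₁ s), (numRuns s)^2
      = Nat.choose (t₀+t₁) t₀
        + 3 * ((t₀+t₁-1) * (2 * Nat.choose (t₀+t₁-2) (t₀-1)))
        + 2 * ((t₀+t₁-1-1) * ((if 2 ≤ t₀ then Nat.choose (t₀+t₁-3) (t₀-2) else 0)
            + Nat.choose (t₀+t₁-3) (t₀-1)))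
        + (t₀+t₁-1-1) * (t₀+t₁-1-2) * (4 * (if 2 ≤ t₀ then Nat.choose (t₀+t₁-4) (t₀-2) else 0)) := by
  set c1 := Nat.choose (t₀+t₁-2) (t₀-1) with hc1
  set c3 := (if 2 ≤ t₀ then Nat.choose (t₀+t₁-3) (t₀-2) else 0) + Nat.choose (t₀+t₁-3) (t₀-1) with hc3
  set c4 := (if 2 ≤ t₀ then Nat.choose (t₀+t₁-4) (t₀-2) else 0) with hc4
  set A := univ.filter (fun s : Fin (t₀+t₁) → Bool => inA t₀ t₁ s) with hA
  set Dp := Dset (t₀+t₁) with hDp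
  set F : (Fin (t₀+t₁) × Fin (t₀+t₁)) → (Fin (t₀+t₁) → Bool) → ℕ :=
    fun p s => if s p.1 ≠ s p.2 then 1 else 0 with hF
  have hnum : ∀ s : Fin (t₀+t₁) → Bool, numRuns s = 1 + ∑ p ∈ Dp, F p s := by
    intro s
    unfold numRuns
    congr 1
    rw [hDp]
    unfold Dset
    rw [← Finset.filter_filter, Finset.card_filter]
  have hX : ∑ s ∈ A, ∑ p ∈ Dp, F p s = (t₀+t₁-1) * (2 * c1) := by
    rw [Finset.sum_comm]
    have hin : ∀ p ∈ Dp, ∑ s ∈ A, F p s = 2 * c1 := by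
      intro p hp
      rw [hDp, mem_Dset] at hp
      have hne : p.1 ≠ p.2 := Fin.ne_of_val_ne (by omega)
      calc ∑ s ∈ A, F p s = (A.filter (fun s => s p.1 ≠ s p.2)).card :=
            (Finset.card_filter _ _).symm
        _ = (univ.filter (fun s => inA t₀ t₁ s ∧ s p.1 ≠ s p.2)).card := by
            rw [hA, Finset.filter_filter]
        _ = 2 * c1 := Ncard2 t₀ t₁ h₀ p.1 p.2 hne
    rw [Finset.sum_congr rfl hin]
    rw [show (∑ _p ∈ Dp, 2 * c1) = ∑ n ∈ Finset.range (t₀+t₁-1), (fun _ => 2 * c1) n from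
      sum_Dset (t₀+t₁) (fun _ => 2 * c1)]
    rw [Finset.sum_const, Finset.card_range, smul_eq_mul]
  have hXX : ∑ s ∈ A, (∑ p ∈ Dp, F p s) * (∑ q ∈ Dp, F q s)
      = (t₀+t₁-1) * (2*c1) + 2 * (((t₀+t₁-1)-1) * c3) + ((t₀+t₁-1)-1)*((t₀+t₁-1)-2) * (4*c4) := by
    have step1 : ∀ s ∈ A, (∑ p ∈ Dp, F p s) * (∑ q ∈ Dp, F q s)
        = ∑ p ∈ Dp, ∑ q ∈ Dp, F p s * F q s := fun s _ => Finset.sum_mul_sum _ _ _ _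
    rw [Finset.sum_congr rfl step1, Finset.sum_comm]
    rw [Finset.sum_congr rfl (fun p _ => Finset.sum_comm)]
    have hpq : ∀ p ∈ Dp, ∀ q ∈ Dp, (∑ s ∈ A, F p s * F q s)
        = (if (q.1:ℕ) = (p.1:ℕ) then 2*c1
           else if (q.1:ℕ) = (p.1:ℕ)+1 ∨ (p.1:ℕ) = (q.1:ℕ)+1 then c3 else 4*c4) := by
      intro p hp q hq
      rw [hDp, mem_Dset] at hp hq
      have hcard : (∑ s ∈ A, F p s * F q s)
          = (univ.filter (fun s => inA t₀ t₁ s ∧ ((s p.1 ≠ s p.2) ∧ (s q.1 ≠ s q.2)))).card := by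
        rw [Finset.sum_congr rfl (fun s _ => ite_one_mul_ite_one _ _)]
        rw [← Finset.card_filter, hA, Finset.filter_filter]
      by_cases hji : (q.1:ℕ) = (p.1:ℕ)
      · rw [if_pos hji]
        have hqp : q = p := by
          clear hcard; apply Prod.ext <;> apply Fin.ext <;> omega
        subst hqp
        rw [hcard, filter_congr (fun s _ => by rw [and_self_iff])]
        exact Ncard2 t₀ t₁ h₀ q.1 q.2 (Fin.ne_of_val_ne (by clear hcard; omega))
      · rw [if_neg hji]
        by_cases hj1 : (q.1:ℕ) = (p.1:ℕ)+1
        · rw [if_pos (Or.inl hj1)]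
          have hq1 : q.1 = p.2 := Fin.ext (by clear hcard; omega)
          rw [hcard, hq1]
          exact Ncard3 t₀ t₁ h₀ p.1 p.2 q.2 (Fin.ne_of_val_ne (by clear hcard; omega))
            (Fin.ne_of_val_ne (by clear hcard; omega)) (Fin.ne_of_val_ne (by clear hcard; omega))
        · by_cases hi1 : (p.1:ℕ) = (q.1:ℕ)+1
          · rw [if_pos (Or.inr hi1)]
            have hp1 : p.1 = q.2 := Fin.ext (by clear hcard; omega)
            rw [hcard, filter_congr (fun s _ => by rw [and_congr_right_iff]; intro _; rw [and_comm]), hp1]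
            exact Ncard3 t₀ t₁ h₀ q.1 q.2 p.2 (Fin.ne_of_val_ne (by clear hcard; omega))
              (Fin.ne_of_val_ne (by clear hcard; omega)) (Fin.ne_of_val_ne (by clear hcard; omega))
          · rw [if_neg (by push_neg; exact ⟨hj1, hi1⟩)]
            rw [hcard]
            exact Ncard4 t₀ t₁ h₀ p.1 p.2 q.1 q.2 (Fin.ne_of_val_ne (by clear hcard; omega))
              (Fin.ne_of_val_ne (by clear hcard; omega)) (Fin.ne_of_val_ne (by clear hcard; omega))
              (Fin.ne_of_val_ne (by clear hcard; omega)) (Fin.ne_of_val_ne (by clear hcard; omega))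
              (Fin.ne_of_val_ne (by clear hcard; omega))
    rw [Finset.sum_congr rfl (fun p hp => Finset.sum_congr rfl (fun q hq => hpq p hp q hq))]
    rw [show (∑ p ∈ Dp, ∑ q ∈ Dp, (if (q.1:ℕ) = (p.1:ℕ) then 2*c1
           else if (q.1:ℕ) = (p.1:ℕ)+1 ∨ (p.1:ℕ) = (q.1:ℕ)+1 then c3 else 4*c4))
        = ∑ n ∈ Finset.range (t₀+t₁-1), (fun n => ∑ q ∈ Dp, (if (q.1:ℕ) = n then 2*c1
           else if (q.1:ℕ) = n+1 ∨ n = (q.1:ℕ)+1 then c3 else 4*c4)) n from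
      sum_Dset (t₀+t₁) (fun n => ∑ q ∈ Dp, (if (q.1:ℕ) = n then 2*c1
           else if (q.1:ℕ) = n+1 ∨ n = (q.1:ℕ)+1 then c3 else 4*c4))]
    rw [Finset.sum_congr rfl (fun n _ => show _ = ∑ m ∈ Finset.range (t₀+t₁-1),
        (fun m => (if m = n then 2*c1 else if m = n+1 ∨ n = m+1 then c3 else 4*c4)) m from
      sum_Dset (t₀+t₁) (fun m => (if m = n then 2*c1 else if m = n+1 ∨ n = m+1 then c3 else 4*c4)))]
    exact sum_gg (t₀+t₁-1) (2*c1) c3 (4*c4)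
  calc ∑ s ∈ A, (numRuns s)^2
      = ∑ s ∈ A, (1 + 2 * (∑ p ∈ Dp, F p s) + (∑ p ∈ Dp, F p s) * (∑ q ∈ Dp, F q s)) := by
        apply Finset.sum_congr rfl
        intro s _
        rw [hnum s]
        ring
    _ = A.card + 2 * (∑ s ∈ A, ∑ p ∈ Dp, F p s)
          + ∑ s ∈ A, (∑ p ∈ Dp, F p s) * (∑ q ∈ Dp, F q s) := by
        rw [Finset.sum_add_distrib, Finset.sum_add_distrib, Finset.sum_const, smul_eq_mul,
          mul_one, ← Finset.mul_sum]
    _ = _ := by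
        rw [hX, hXX, cardA t₀ t₁]
        ring

section Hfacts

lemma H1fact (t₀ t₁ : ℕ) (h₀ : 1 ≤ t₀) (h₁ : 1 ≤ t₁) :
    (Nat.choose (t₀+t₁-2) (t₀-1) : ℚ) * (((t₀:ℚ)+(t₁:ℚ)) * (((t₀:ℚ)+(t₁:ℚ))-1))
      = (Nat.choose (t₀+t₁) t₀ : ℚ) * ((t₀:ℚ)*(t₁:ℚ)) := by
  obtain ⟨p, rfl⟩ := Nat.exists_eq_add_of_le h₀
  obtain ⟨q, rfl⟩ := Nat.exists_eq_add_of_le h₁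
  rw [show 1+p+(1+q)-2 = p+q by omega, show 1+p-1 = p by omega,
      show 1+p+(1+q) = p+q+2 by omega, show 1+p = p+1 by omega, show 1+q = q+1 by omega]
  push_cast
  linear_combination (-1 : ℚ) * Qratio1 p q

lemma H2Ffact (t₀ t₁ : ℕ) (h₀ : 2 ≤ t₀) (h₁ : 1 ≤ t₁) :
    (Nat.choose (t₀+t₁-3) (t₀-2) : ℚ)
        * (((t₀:ℚ)+(t₁:ℚ)) * ((((t₀:ℚ)+(t₁:ℚ))-1) * (((t₀:ℚ)+(t₁:ℚ))-2)))
      = (Nat.choose (t₀+t₁) t₀ : ℚ) * ((t₀:ℚ)*((t₀:ℚ)-1)*(t₁:ℚ)) := by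
  obtain ⟨p, rfl⟩ := Nat.exists_eq_add_of_le h₀
  obtain ⟨q, rfl⟩ := Nat.exists_eq_add_of_le h₁
  rw [show 2+p+(1+q)-3 = p+q by omega, show 2+p-2 = p by omega,
      show 2+p+(1+q) = p+q+3 by omega, show 2+p = p+2 by omega, show 1+q = q+1 by omega]
  push_cast
  linear_combination (-1 : ℚ) * Qratio2F p q

lemma H2Tfact (t₀ t₁ : ℕ) (h₀ : 1 ≤ t₀) (h₁ : 1 ≤ t₁) :
    (Nat.choose (t₀+t₁-3) (t₀-1) : ℚ)
        * (((t₀:ℚ)+(t₁:ℚ)) * ((((t₀:ℚ)+(t₁:ℚ))-1) * (((t₀:ℚ)+(t₁:ℚ))-2)))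
      = (Nat.choose (t₀+t₁) t₀ : ℚ) * ((t₀:ℚ)*(t₁:ℚ)*((t₁:ℚ)-1)) := by
  rcases Nat.lt_or_ge t₁ 2 with h2 | h2
  · have ht1 : t₁ = 1 := by omega
    subst ht1
    rcases Nat.lt_or_ge t₀ 2 with h3 | h3
    · have ht0 : t₀ = 1 := by omega
      subst ht0
      push_cast
      ring
    · rw [show t₀+1-3 = t₀-2 by omega,
        Nat.choose_eq_zero_of_lt (by omega : t₀-2 < t₀-1)]
      push_cast
      ring
  · obtain ⟨p, rfl⟩ := Nat.exists_eq_add_of_le h₀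
    obtain ⟨q, rfl⟩ := Nat.exists_eq_add_of_le h2
    rw [show 1+p+(2+q)-3 = p+q by omega, show 1+p-1 = p by omega,
        show 1+p+(2+q) = p+q+3 by omega, show 1+p = p+1 by omega, show 2+q = q+2 by omega]
    push_cast
    linear_combination (-1 : ℚ) * Qratio2T p q

lemma H4fact (t₀ t₁ : ℕ) (h₀ : 2 ≤ t₀) (h₁ : 1 ≤ t₁) :
    (Nat.choose (t₀+t₁-4) (t₀-2) : ℚ)
        * (((t₀:ℚ)+(t₁:ℚ)) * ((((t₀:ℚ)+(t₁:ℚ))-1) * ((((t₀:ℚ)+(t₁:ℚ))-2) * (((t₀:ℚ)+(t₁:ℚ))-3))))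
      = (Nat.choose (t₀+t₁) t₀ : ℚ) * ((t₀:ℚ)*((t₀:ℚ)-1)*(t₁:ℚ)*((t₁:ℚ)-1)) := by
  rcases Nat.lt_or_ge t₁ 2 with h2 | h2
  · have ht1 : t₁ = 1 := by omega
    subst ht1
    rcases Nat.lt_or_ge t₀ 3 with h3 | h3
    · have ht0 : t₀ = 2 := by omega
      subst ht0
      norm_num
    · rw [show t₀+1-4 = t₀-3 by omega,
        Nat.choose_eq_zero_of_lt (by omega : t₀-3 < t₀-2)]
      push_cast
      ring
  · obtain ⟨p, rfl⟩ := Nat.exists_eq_add_of_le h₀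
    obtain ⟨q, rfl⟩ := Nat.exists_eq_add_of_le h2
    rw [show 2+p+(2+q)-4 = p+q by omega, show 2+p-2 = p by omega,
        show 2+p+(2+q) = p+q+4 by omega, show 2+p = p+2 by omega, show 2+q = q+2 by omega]
    push_cast
    linear_combination (-1 : ℚ) * Qratio4 p q

end Hfacts

lemma final_alg (a b C n1 n3F n3T n4 : ℚ)
    (hC : C ≠ 0) (hT : a + b ≠ 0) (hT1 : a + b - 1 ≠ 0)
    (H1 : n1 * ((a+b) * ((a+b)-1)) = C * (a*b))
    (H2F : n3F * ((a+b) * (((a+b)-1) * ((a+b)-2))) = C * (a*(a-1)*b))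
    (H2T : n3T * ((a+b) * (((a+b)-1) * ((a+b)-2))) = C * (a*b*(b-1)))
    (H4 : n4 * ((a+b) * (((a+b)-1) * (((a+b)-2) * ((a+b)-3)))) = C * (a*(a-1)*b*(b-1))) :
    (C + 3*(((a+b)-1)*(2*n1)) + 2*(((a+b)-2)*(n3F+n3T)) + ((a+b)-2)*((a+b)-3)*(4*n4))/C
      - (1 + 2*a*b/(a+b))^2 = 2*a*b*(2*a*b-(a+b))/((a+b)^2*((a+b)-1)) := by
  have hden : (a+b)^2*((a+b)-1) ≠ 0 := mul_ne_zero (pow_ne_zero _ hT) hT1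
  have hfrac : (C + 3*(((a+b)-1)*(2*n1)) + 2*(((a+b)-2)*(n3F+n3T)) + ((a+b)-2)*((a+b)-3)*(4*n4))/C
      = ((a+b)^2*((a+b)-1) + 6*(a+b)*((a+b)-1)*(a*b) + 2*(a+b)*(a*b)*((a+b)-2)
          + 4*(a+b)*(a*(a-1)*b*(b-1))) / ((a+b)^2*((a+b)-1)) := by
    rw [div_eq_div_iff hC hden]
    linear_combination 6*(a+b)*((a+b)-1)*H1 + 2*(a+b)*H2F + 2*(a+b)*H2T + 4*(a+b)*H4
  rw [hfrac]
  field_simp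
  ring

/-- **Variance of the Wald–Wolfowitz runs statistic (Section 4.1 of the paper).** Over the
set `A` of boolean sequences of length `T = t₀ + t₁ ≥ 2` with exactly `t₀ ≥ 1` entries
`false` and `t₁ ≥ 1` entries `true` (of cardinality `C(T, t₀)`), the variance of the number
of runs under the uniform distribution equals `2t₀t₁(2t₀t₁ − T)/(T²(T − 1))`. -/
theorem variance_numRuns_eq (t₀ t₁ : ℕ) (h₀ : 1 ≤ t₀) (h₁ : 1 ≤ t₁) :
    ((∑ s ∈ Finset.univ.filter (fun s : Fin (t₀ + t₁) → Bool =>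
          (Finset.univ.filter (fun i => s i = false)).card = t₀ ∧
          (Finset.univ.filter (fun i => s i = true)).card = t₁), (numRuns s) ^ 2 : ℕ) : ℚ) /
        (Nat.choose (t₀ + t₁) t₀ : ℚ)
      - (1 + 2 * (t₀ : ℚ) * (t₁ : ℚ) / ((t₀ : ℚ) + (t₁ : ℚ))) ^ 2 =
    2 * (t₀ : ℚ) * (t₁ : ℚ) * (2 * (t₀ : ℚ) * (t₁ : ℚ) - ((t₀ : ℚ) + (t₁ : ℚ))) /
      (((t₀ : ℚ) + (t₁ : ℚ)) ^ 2 * (((t₀ : ℚ) + (t₁ : ℚ)) - 1)) := by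
  have hset : (Finset.univ.filter (fun s : Fin (t₀ + t₁) → Bool =>
          (Finset.univ.filter (fun i => s i = false)).card = t₀ ∧
          (Finset.univ.filter (fun i => s i = true)).card = t₁))
      = univ.filter (fun s => inA t₀ t₁ s) := by
    apply filter_congr
    intro s _
    unfold inA
    rfl
  rw [hset, total_sum t₀ t₁ h₀ h₁]
  by_cases h11 : t₀ = 1 ∧ t₁ = 1
  · obtain ⟨rfl, rfl⟩ := h11
    norm_num [Nat.choose]
  · have hT3 : 3 ≤ t₀ + t₁ := by omega
    rw [show t₀+t₁-1-1 = t₀+t₁-2 by omega, show t₀+t₁-1-2 = t₀+t₁-3 by omega]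
    have hCpos : 0 < Nat.choose (t₀+t₁) t₀ := Nat.choose_pos (by omega)
    have hCne : ((Nat.choose (t₀+t₁) t₀ : ℕ) : ℚ) ≠ 0 := by
      exact_mod_cast Nat.pos_iff_ne_zero.mp hCpos
    have hTne : ((t₀:ℚ)+(t₁:ℚ)) ≠ 0 := by positivity
    have hQT3 : (3:ℚ) ≤ (t₀:ℚ)+(t₁:ℚ) := by exact_mod_cast hT3
    have hT1ne : ((t₀:ℚ)+(t₁:ℚ))-1 ≠ 0 := by intro h; nlinarith
    have e1 : ((t₀+t₁-1 : ℕ):ℚ) = (t₀:ℚ)+(t₁:ℚ)-1 := by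
      rw [Nat.cast_sub (by omega)]; push_cast; ring
    have e2 : ((t₀+t₁-2 : ℕ):ℚ) = (t₀:ℚ)+(t₁:ℚ)-2 := by
      rw [Nat.cast_sub (by omega)]; push_cast; ring
    have e3 : ((t₀+t₁-3 : ℕ):ℚ) = (t₀:ℚ)+(t₁:ℚ)-3 := by
      rw [Nat.cast_sub (by omega)]; push_cast; ring
    rcases Nat.lt_or_ge t₀ 2 with h2 | h2
    · -- t₀ = 1
      have ht0 : t₀ = 1 := by omega
      subst ht0
      obtain ⟨q, rfl⟩ := Nat.exists_eq_add_of_le (show 2 ≤ t₁ by omega)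
      rw [if_neg (by omega), if_neg (by omega)]
      rw [show (1:ℕ)-1 = 0 from rfl, Nat.choose_zero_right, Nat.choose_zero_right,
        Nat.choose_one_right]
      rw [show 1+(2+q)-1 = q+2 by omega, show 1+(2+q)-2 = q+1 by omega,
        show 1+(2+q)-3 = q by omega, show 1+(2+q) = q+3 by omega]
      have hq0 : ((q:ℚ)+3) ≠ 0 := by positivity
      have hq1 : ((1:ℚ)+(2+q)) ≠ 0 := by positivity
      have hq2 : ((1:ℚ)+((2:ℚ)+(q:ℚ)))-1 ≠ 0 := by
        push_cast at hT1ne ⊢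
        intro h; apply hT1ne; linarith
      push_cast
      field_simp
      ring
    · rw [if_pos h2, if_pos h2]
      have H1 := H1fact t₀ t₁ h₀ h₁
      have H2F := H2Ffact t₀ t₁ h2 h₁
      have H2T := H2Tfact t₀ t₁ h₀ h₁
      have H4 := H4fact t₀ t₁ h2 h₁
      push_cast
      rw [e1, e2, e3]
      exact final_alg (t₀:ℚ) (t₁:ℚ) _ _ _ _ _ hCne hTne hT1ne
        (by linear_combination H1) (by linear_combination H2F)
        (by linear_combination H2T) (by linear_combination H4)
end
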